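/- arXiv:1009.3173 — 6 statements merged into one kernel-verified Lean document; each statement's English description precedes it below -/
import Mathlib

section
/- Let b > 1, T > 0, Ω = (1,b)×(1,b) ⊂ ℝ², and let G : ℝ × ℝ² → ℝ² be a C¹ vector field such that for some δ > 0 and for all t ∈ [0,T]: G₁(t,(1,θ)) ≥ δ, G₁(t,(b,θ)) ≤ −δ for θ ∈ [1,b], and G₂(t,(x,1)) ≥ δ, G₂(t,(x,b)) ≤ −δ for x ∈ [1,b]. Let X(t;τ,y) denote the unique solution of dX/dt = G(t,X) with X(τ;τ,y) = y. Then for each t ∈ [0,T] the map (τ,σ) ↦ X(t;τ,σ) is injective on the set {(τ,σ) : 0 ≤ τ ≤ t, σ ∈ ∂Ω}: if σ, σ' ∈ ∂Ω, 0 ≤ τ, τ' ≤ t and X(t;τ,σ) = X(t;τ',σ'), then τ = τ' and σ = σ'. -/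
/-!
Two characteristics ending at the same point at time `t` solve the same `C¹` ODE and agree at
time `t`, so they are one trajectory `f`. As `G` points strictly into the closed square on
`[0, T]`, a trajectory lying in the closed square at time `τ` lies in the open square at every
time of `(τ, T]`; hence `f` meets `∂Ω` at most once in `[0, T]`, which forces `τ = τ'` and then
`σ = f τ = σ'`.
-/

open Set Filter Topology

theorem ODE_solution_unique_of_contDiff {E : Type*} [NormedAddCommGroup E] [NormedSpace ℝ E]
    [ProperSpace E] {v : ℝ → E → E} (hv : ContDiff ℝ 1 fun p : ℝ × E => v p.1 p.2)
    {f g : ℝ → E} (hf : ∀ t, HasDerivAt f (v t (f t)) t) (hg : ∀ t, HasDerivAt g (v t (g t)) t)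
    {t₀ : ℝ} (heq : f t₀ = g t₀) : f = g := by
  funext t
  obtain ⟨A, B, ht, ht₀⟩ : ∃ A B, t ∈ Ioo A B ∧ t₀ ∈ Ioo A B :=
    ⟨min t t₀ - 1, max t t₀ + 1, by grind⟩
  have hfc : Continuous f := continuous_iff_continuousAt.2 fun u => (hf u).continuousAt
  have hgc : Continuous g := continuous_iff_continuousAt.2 fun u => (hg u).continuousAt
  obtain ⟨R, hR⟩ := ((isCompact_Icc.image hfc).union
    (isCompact_Icc.image hgc)).isBounded.subset_closedBall (0 : E)
  obtain ⟨K, hK⟩ := hv.contDiffOn.exists_lipschitzOnWith one_ne_zero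
    ((convex_Icc A B).prod (convex_closedBall 0 R)) (isCompact_Icc.prod (isCompact_closedBall 0 R))
  have hlip : ∀ u ∈ Icc A B, LipschitzOnWith K (v u) (Metric.closedBall 0 R) := fun u hu => by
    simpa [Function.comp_def] using
      hK.comp (LipschitzWith.prodMk_left u).lipschitzOnWith fun y hy => ⟨hu, hy⟩
  exact ODE_solution_unique_of_mem_Ioo (s := fun _ => Metric.closedBall 0 R)
    (fun u hu => hlip u (Ioo_subset_Icc_self hu)) ht₀
    (fun u hu => ⟨hf u, hR (.inl ⟨u, Ioo_subset_Icc_self hu, rfl⟩)⟩)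
    (fun u hu => ⟨hg u, hR (.inr ⟨u, Ioo_subset_Icc_self hu, rfl⟩)⟩) heq ht

section Scalar

variable {φ : ℝ → ℝ} {c x a b : ℝ}

lemma HasDerivAt.eventually_nhdsGT_lt (h : HasDerivAt φ c x) (hc : 0 < c) :
    ∀ᶠ u in 𝓝[>] x, φ x < φ u := by
  have hslope : ∀ᶠ u in 𝓝[≠] x, 0 < slope φ x u :=
    hasDerivAt_iff_tendsto_slope.mp h (Ioi_mem_nhds hc)
  filter_upwards [nhdsGT_le_nhdsNE x hslope, self_mem_nhdsWithin] with u hu hxu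
  exact (slope_pos_iff hxu).mp hu

lemma HasDerivAt.eventually_nhdsLT_lt (h : HasDerivAt φ c x) (hc : 0 < c) :
    ∀ᶠ u in 𝓝[<] x, φ u < φ x := by
  have hslope : ∀ᶠ u in 𝓝[≠] x, 0 < slope φ x u :=
    hasDerivAt_iff_tendsto_slope.mp h (Ioi_mem_nhds hc)
  filter_upwards [nhdsLT_le_nhdsNE x hslope, self_mem_nhdsWithin] with u hu hux
  exact (slope_pos_iff_gt hux).mp hu

lemma HasDerivAt.eventually_nhdsGT_gt (h : HasDerivAt φ c x) (hc : c < 0) :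
    ∀ᶠ u in 𝓝[>] x, φ u < φ x := by
  simpa using h.neg.eventually_nhdsGT_lt (neg_pos.mpr hc)

lemma HasDerivAt.eventually_nhdsLT_gt (h : HasDerivAt φ c x) (hc : c < 0) :
    ∀ᶠ u in 𝓝[<] x, φ x < φ u := by
  simpa using h.neg.eventually_nhdsLT_lt (neg_pos.mpr hc)

def PointsIntoIcc (a b y c : ℝ) : Prop := (y = a → 0 < c) ∧ (y = b → c < 0)

lemma HasDerivAt.eventually_nhdsGT_mem_Ioo (h : HasDerivAt φ c x) (hx : φ x ∈ Icc a b)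
    (hin : PointsIntoIcc a b (φ x) c) : ∀ᶠ u in 𝓝[>] x, φ u ∈ Ioo a b := by
  have hlower : ∀ᶠ u in 𝓝[>] x, a < φ u := by
    rcases hx.1.eq_or_lt with hxa | hxa
    · simpa [← hxa] using h.eventually_nhdsGT_lt (hin.1 hxa.symm)
    · exact nhdsWithin_le_nhds (h.continuousAt.eventually (lt_mem_nhds hxa))
  have hupper : ∀ᶠ u in 𝓝[>] x, φ u < b := by
    rcases hx.2.eq_or_lt with hxb | hxb
    · simpa [hxb] using h.eventually_nhdsGT_gt (hin.2 hxb)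
    · exact nhdsWithin_le_nhds (h.continuousAt.eventually (gt_mem_nhds hxb))
  exact hlower.and hupper

lemma HasDerivAt.eventually_nhdsLT_notMem_Icc (h : HasDerivAt φ c x)
    (hx : φ x ∈ ({a, b} : Set ℝ)) (hin : PointsIntoIcc a b (φ x) c) :
    ∀ᶠ u in 𝓝[<] x, φ u ∉ Icc a b := by
  rcases hx with hxa | hxb
  · filter_upwards [h.eventually_nhdsLT_lt (hin.1 hxa)] with u hu hmem
    exact (hxa ▸ hu).not_ge hmem.1
  · filter_upwards [h.eventually_nhdsLT_gt (hin.2 hxb)] with u hu hmem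
    exact (mem_singleton_iff.mp hxb ▸ hu).not_ge hmem.2

end Scalar

section Coordinates

variable {𝕜 E F : Type*} [NontriviallyNormedField 𝕜] [NormedAddCommGroup E] [NormedSpace 𝕜 E]
  [NormedAddCommGroup F] [NormedSpace 𝕜 F] {f : 𝕜 → E × F} {v : E × F} {x : 𝕜}

theorem HasDerivAt.fst (h : HasDerivAt f v x) : HasDerivAt (fun u => (f u).1) v.1 x :=
  (hasFDerivAt_fst (𝕜 := 𝕜) (p := f x)).comp_hasDerivAt x h

theorem HasDerivAt.snd (h : HasDerivAt f v x) : HasDerivAt (fun u => (f u).2) v.2 x :=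
  (hasFDerivAt_snd (𝕜 := 𝕜) (p := f x)).comp_hasDerivAt x h

end Coordinates

section Box

variable {a₁ b₁ a₂ b₂ : ℝ}

def PointsIntoBox (a₁ b₁ a₂ b₂ : ℝ) (y v : ℝ × ℝ) : Prop :=
  PointsIntoIcc a₁ b₁ y.1 v.1 ∧ PointsIntoIcc a₂ b₂ y.2 v.2

lemma frontier_Ioo_prod_Ioo (h₁ : a₁ < b₁) (h₂ : a₂ < b₂) :
    frontier (Ioo a₁ b₁ ×ˢ Ioo a₂ b₂) = Icc a₁ b₁ ×ˢ {a₂, b₂} ∪ {a₁, b₁} ×ˢ Icc a₂ b₂ := by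
  rw [frontier_prod_eq, closure_Ioo h₁.ne, closure_Ioo h₂.ne, frontier_Ioo h₁, frontier_Ioo h₂]

lemma frontier_Ioo_prod_Ioo_eq_diff (h₁ : a₁ < b₁) (h₂ : a₂ < b₂) :
    frontier (Ioo a₁ b₁ ×ˢ Ioo a₂ b₂) = Icc a₁ b₁ ×ˢ Icc a₂ b₂ \ Ioo a₁ b₁ ×ˢ Ioo a₂ b₂ := by
  rw [(isOpen_Ioo.prod isOpen_Ioo).frontier_eq, closure_prod_eq, closure_Ioo h₁.ne,
    closure_Ioo h₂.ne]

variable {f : ℝ → ℝ × ℝ} {v : ℝ × ℝ} {x : ℝ}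

lemma HasDerivAt.eventually_nhdsGT_mem_Ioo_prod_Ioo (h : HasDerivAt f v x)
    (hx : f x ∈ Icc a₁ b₁ ×ˢ Icc a₂ b₂) (hin : PointsIntoBox a₁ b₁ a₂ b₂ (f x) v) :
    ∀ᶠ u in 𝓝[>] x, f u ∈ Ioo a₁ b₁ ×ˢ Ioo a₂ b₂ :=
  (h.fst.eventually_nhdsGT_mem_Ioo hx.1 hin.1).and (h.snd.eventually_nhdsGT_mem_Ioo hx.2 hin.2)

lemma HasDerivAt.eventually_nhdsLT_notMem_Icc_prod_Icc (h : HasDerivAt f v x) (h₁ : a₁ < b₁)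
    (h₂ : a₂ < b₂) (hx : f x ∈ frontier (Ioo a₁ b₁ ×ˢ Ioo a₂ b₂))
    (hin : PointsIntoBox a₁ b₁ a₂ b₂ (f x) v) :
    ∀ᶠ u in 𝓝[<] x, f u ∉ Icc a₁ b₁ ×ˢ Icc a₂ b₂ := by
  rw [frontier_Ioo_prod_Ioo h₁ h₂] at hx
  rcases hx with ⟨-, hx₂⟩ | ⟨hx₁, -⟩
  · filter_upwards [h.snd.eventually_nhdsLT_notMem_Icc hx₂ hin.2]
      with u hu hmem using hu hmem.2
  · filter_upwards [h.fst.eventually_nhdsLT_notMem_Icc hx₁ hin.1]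
      with u hu hmem using hu hmem.1

variable {G : ℝ → ℝ × ℝ → ℝ × ℝ} {τ T : ℝ}

lemma mapsTo_Icc_prod_Icc_of_pointsIntoBox (hf : ∀ u ∈ Icc τ T, HasDerivAt f (G u (f u)) u)
    (hin : ∀ u ∈ Icc τ T, ∀ y ∈ Icc a₁ b₁ ×ˢ Icc a₂ b₂, PointsIntoBox a₁ b₁ a₂ b₂ y (G u y))
    (hτ : f τ ∈ Icc a₁ b₁ ×ˢ Icc a₂ b₂) : MapsTo f (Icc τ T) (Icc a₁ b₁ ×ˢ Icc a₂ b₂) := by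
  have hcont : ContinuousOn f (Icc τ T) := fun u hu => (hf u hu).continuousAt.continuousWithinAt
  refine IsClosed.Icc_subset_of_forall_mem_nhdsWithin (s := f ⁻¹' (Icc a₁ b₁ ×ˢ Icc a₂ b₂)) ?_
    hτ fun u ⟨hu, huT⟩ => ?_
  · rw [inter_comm]
    exact hcont.preimage_isClosed_of_isClosed isClosed_Icc (isClosed_Icc.prod isClosed_Icc)
  · have hu' : u ∈ Icc τ T := Ico_subset_Icc_self huT
    filter_upwards [(hf u hu').eventually_nhdsGT_mem_Ioo_prod_Ioo hu (hin u hu' _ hu)]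
      with w hw using prod_mono Ioo_subset_Icc_self Ioo_subset_Icc_self hw

lemma mapsTo_Ioo_prod_Ioo_of_pointsIntoBox (h₁ : a₁ < b₁) (h₂ : a₂ < b₂)
    (hf : ∀ u ∈ Icc τ T, HasDerivAt f (G u (f u)) u)
    (hin : ∀ u ∈ Icc τ T, ∀ y ∈ Icc a₁ b₁ ×ˢ Icc a₂ b₂, PointsIntoBox a₁ b₁ a₂ b₂ y (G u y))
    (hτ : f τ ∈ Icc a₁ b₁ ×ˢ Icc a₂ b₂) : MapsTo f (Ioc τ T) (Ioo a₁ b₁ ×ˢ Ioo a₂ b₂) := by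
  have hbox := mapsTo_Icc_prod_Icc_of_pointsIntoBox hf hin hτ
  intro u hu
  by_contra hnot
  have hu' : u ∈ Icc τ T := Ioc_subset_Icc_self hu
  have hfr : f u ∈ frontier (Ioo a₁ b₁ ×ˢ Ioo a₂ b₂) := by
    rw [frontier_Ioo_prod_Ioo_eq_diff h₁ h₂]
    exact ⟨hbox hu', hnot⟩
  have hbefore : ∀ᶠ w in 𝓝[<] u, f w ∈ Icc a₁ b₁ ×ˢ Icc a₂ b₂ := by
    filter_upwards [Ioo_mem_nhdsLT hu.1] with w hw using hbox ⟨hw.1.le, hw.2.le.trans hu.2⟩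
  obtain ⟨w, hout, hw⟩ :=
    (((hf u hu').eventually_nhdsLT_notMem_Icc_prod_Icc h₁ h₂ hfr
      (hin u hu' _ (hbox hu'))).and hbefore).exists
  exact hout hw

lemma eq_of_mem_frontier_Ioo_prod_Ioo (h₁ : a₁ < b₁) (h₂ : a₂ < b₂) {t₀ τ' : ℝ}
    (hf : ∀ u ∈ Icc t₀ T, HasDerivAt f (G u (f u)) u)
    (hin : ∀ u ∈ Icc t₀ T, ∀ y ∈ Icc a₁ b₁ ×ˢ Icc a₂ b₂, PointsIntoBox a₁ b₁ a₂ b₂ y (G u y))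
    (hτ : τ ∈ Icc t₀ T) (hτ' : τ' ∈ Icc t₀ T) (hfτ : f τ ∈ frontier (Ioo a₁ b₁ ×ˢ Ioo a₂ b₂))
    (hfτ' : f τ' ∈ frontier (Ioo a₁ b₁ ×ˢ Ioo a₂ b₂)) : τ = τ' := by
  wlog hlt : τ < τ' generalizing τ τ'
  · rcases (not_lt.mp hlt).eq_or_lt with heq | hgt
    · exact heq.symm
    · exact (this hτ' hτ hfτ' hfτ hgt).symm
  rw [frontier_Ioo_prod_Ioo_eq_diff h₁ h₂] at hfτ hfτ'
  have hsub : Icc τ T ⊆ Icc t₀ T := Icc_subset_Icc_left hτ.1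
  exact absurd (mapsTo_Ioo_prod_Ioo_of_pointsIntoBox h₁ h₂ (fun u hu => hf u (hsub hu))
    (fun u hu => hin u (hsub hu)) hfτ.1 ⟨hlt, hτ'.2⟩) hfτ'.2

end Box

theorem stmt3_general (b T δ : ℝ) (hb : 1 < b) (hδ : 0 < δ)
    (G : ℝ → ℝ × ℝ → ℝ × ℝ)
    (hG : ContDiff ℝ 1 fun p : ℝ × (ℝ × ℝ) => G p.1 p.2)
    (hleft : ∀ t ∈ Set.Icc (0:ℝ) T, ∀ θ ∈ Set.Icc (1:ℝ) b, δ ≤ (G t (1, θ)).1)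
    (hright : ∀ t ∈ Set.Icc (0:ℝ) T, ∀ θ ∈ Set.Icc (1:ℝ) b, (G t (b, θ)).1 ≤ -δ)
    (hbot : ∀ t ∈ Set.Icc (0:ℝ) T, ∀ x ∈ Set.Icc (1:ℝ) b, δ ≤ (G t (x, 1)).2)
    (htop : ∀ t ∈ Set.Icc (0:ℝ) T, ∀ x ∈ Set.Icc (1:ℝ) b, (G t (x, b)).2 ≤ -δ)
    (X : ℝ → ℝ → ℝ × ℝ → ℝ × ℝ)
    (hXinit : ∀ τ y, X τ τ y = y)
    (hXode : ∀ τ y t, HasDerivAt (fun u => X u τ y) (G t (X t τ y)) t) :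
    ∀ t ∈ Set.Icc (0:ℝ) T, ∀ τ ∈ Set.Icc (0:ℝ) t, ∀ τ' ∈ Set.Icc (0:ℝ) t,
      ∀ σ ∈ frontier (Set.Ioo (1:ℝ) b ×ˢ Set.Ioo (1:ℝ) b),
      ∀ σ' ∈ frontier (Set.Ioo (1:ℝ) b ×ˢ Set.Ioo (1:ℝ) b),
      X t τ σ = X t τ' σ' → τ = τ' ∧ σ = σ' := by
  intro t ht τ hτ τ' hτ' σ hσ σ' hσ' hXeq
  have hin : ∀ u ∈ Icc 0 T, ∀ y ∈ Icc 1 b ×ˢ Icc 1 b, PointsIntoBox 1 b 1 b y (G u y) := by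
    rintro u hu ⟨y₁, y₂⟩ ⟨hy₁, hy₂⟩
    refine ⟨⟨?_, ?_⟩, ?_, ?_⟩ <;> rintro rfl
    · exact hδ.trans_le (hleft u hu y₂ hy₂)
    · exact (hright u hu y₂ hy₂).trans_lt (neg_neg_of_pos hδ)
    · exact hδ.trans_le (hbot u hu y₁ hy₁)
    · exact (htop u hu y₁ hy₁).trans_lt (neg_neg_of_pos hδ)
  have hflow : (fun u => X u τ σ) = fun u => X u τ' σ' :=
    ODE_solution_unique_of_contDiff hG (hXode τ σ) (hXode τ' σ') hXeq
  have hττ' : τ = τ' := by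
    refine eq_of_mem_frontier_Ioo_prod_Ioo hb hb (fun u _ => hXode τ σ u) hin
      ⟨hτ.1, hτ.2.trans ht.2⟩ ⟨hτ'.1, hτ'.2.trans ht.2⟩ ?_ ?_
    · simpa only [hXinit] using hσ
    · simpa only [congrFun hflow τ', hXinit] using hσ'
  subst hττ'
  exact ⟨rfl, by simpa only [hXinit] using congrFun hflow τ⟩

/-- **Injectivity of the characteristic map on `[0,t] × ∂Ω`.** Let `G` be a `C¹` vector field
pointing strictly inward along the boundary of the square `Ω = (1,b)²` on the time interval
`[0,T]`, and let `X t τ y` be the solution of `dX/dt = G(t,X)` with `X(τ;τ,y) = y`. Then for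
every `t ∈ [0,T]`, the map `(τ,σ) ↦ X(t;τ,σ)` is injective on `{(τ,σ) : 0 ≤ τ ≤ t, σ ∈ ∂Ω}`. -/
theorem stmt3 (b T δ : ℝ) (hb : 1 < b) (hT : 0 < T) (hδ : 0 < δ)
    (G : ℝ → ℝ × ℝ → ℝ × ℝ)
    (hG : ContDiff ℝ 1 fun p : ℝ × (ℝ × ℝ) => G p.1 p.2)
    (hleft : ∀ t ∈ Set.Icc (0:ℝ) T, ∀ θ ∈ Set.Icc (1:ℝ) b, δ ≤ (G t (1, θ)).1)
    (hright : ∀ t ∈ Set.Icc (0:ℝ) T, ∀ θ ∈ Set.Icc (1:ℝ) b, (G t (b, θ)).1 ≤ -δ)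
    (hbot : ∀ t ∈ Set.Icc (0:ℝ) T, ∀ x ∈ Set.Icc (1:ℝ) b, δ ≤ (G t (x, 1)).2)
    (htop : ∀ t ∈ Set.Icc (0:ℝ) T, ∀ x ∈ Set.Icc (1:ℝ) b, (G t (x, b)).2 ≤ -δ)
    (X : ℝ → ℝ → ℝ × ℝ → ℝ × ℝ)
    (hXinit : ∀ τ y, X τ τ y = y)
    (hXode : ∀ τ y t, HasDerivAt (fun u => X u τ y) (G t (X t τ y)) t) :
    ∀ t ∈ Set.Icc (0:ℝ) T, ∀ τ ∈ Set.Icc (0:ℝ) t, ∀ τ' ∈ Set.Icc (0:ℝ) t,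
      ∀ σ ∈ frontier (Set.Ioo (1:ℝ) b ×ˢ Set.Ioo (1:ℝ) b),
      ∀ σ' ∈ frontier (Set.Ioo (1:ℝ) b ×ˢ Set.Ioo (1:ℝ) b),
      X t τ σ = X t τ' σ' → τ = τ' ∧ σ = σ' :=
  stmt3_general b T δ hb hδ G hG hleft hright hbot htop X hXinit hXode
end

section
/- Let G : ℝ × ℝ² → ℝ² be a C¹ vector field and let X(t;τ,y) denote the unique global solution of dX/dt = G(t,X) with X(τ;τ,y) = y. Let σ : [0,1] → ℝ² be a C¹ curve with |σ'(s)| = 1, and set ν(s) := (σ'₂(s), −σ'₁(s)). Fix τ and s, and suppose the vector-valued maps u ↦ V₁(u) := ∂_τX(u;τ,σ(s)) and u ↦ V₂(u) := ∂_sX(u;τ,σ(s)) exist, are differentiable, satisfy the variational equation V'(u) = D_xG(u, X(u;τ,σ(s))) · V(u), and satisfy the initial conditions V₁(τ) = −G(τ,σ(s)) and V₂(τ) = σ'(s). Then for all t ≥ τ, the Jacobian J₁(t;τ,s) := |det[V₁(t), V₂(t)]| satisfies J₁(t;τ,s) = |G(τ,σ(s)) · ν(s)| · exp(∫_τ^t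 div_x G(u, X(u;τ,σ(s))) du). -/
/-!
Liouville's formula in the plane. Along the characteristic, the determinant `W = det[V₁, V₂]` of
two solutions of the variational equation `V' = A V` satisfies the scalar linear equation
`W' = (tr A) W`, since `det[A v, w] + det[v, A w] = tr A · det[v, w]` for every `2 × 2` matrix `A`.
Hence `W(t) = W(τ) exp ∫_τ^t tr A`, and `W(τ) = det[-G(τ, σ(s)), σ'(s)] = -G(τ, σ(s)) · ν(s)`.
-/

open Real

section Wedge

variable {R : Type*} [CommRing R]

def wedge (v w : R × R) : R := v.1 * w.2 - v.2 * w.1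

theorem LinearMap.trace_prod_self (f : R × R →ₗ[R] R × R) :
    LinearMap.trace R (R × R) f = (f (1, 0)).1 + (f (0, 1)).2 := by
  rw [LinearMap.trace_eq_matrix_trace R (Module.Basis.finTwoProd R), Matrix.trace,
    Fin.sum_univ_two]
  simp [LinearMap.toMatrix_apply]

theorem LinearMap.apply_eq_fst_smul_add_snd_smul {M : Type*} [AddCommGroup M] [Module R M]
    (f : R × R →ₗ[R] M) (v : R × R) :
    f v = v.1 • f (1, 0) + v.2 • f (0, 1) := by
  rw [← map_smul, ← map_smul, ← map_add]
  simp

theorem wedge_map_add_wedge_map (f : R × R →ₗ[R] R × R) (v w : R × R) :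
    wedge (f v) w + wedge v (f w) = LinearMap.trace R (R × R) f * wedge v w := by
  rw [f.trace_prod_self, f.apply_eq_fst_smul_add_snd_smul v, f.apply_eq_fst_smul_add_snd_smul w]
  simp only [wedge, Prod.fst_add, Prod.snd_add, Prod.smul_fst, Prod.smul_snd, smul_eq_mul]
  ring

end Wedge

section Derivatives

variable {𝕜 : Type*} [NontriviallyNormedField 𝕜]

theorem HasDerivAt.wedge {V W : 𝕜 → 𝕜 × 𝕜} {V' W' : 𝕜 × 𝕜} {x : 𝕜}
    (hV : HasDerivAt V V' x) (hW : HasDerivAt W W' x) :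
    HasDerivAt (fun u => wedge (V u) (W u)) (wedge V' (W x) + wedge (V x) W') x := by
  have fst {U : 𝕜 → 𝕜 × 𝕜} {U'} (h : HasDerivAt U U' x) :
      HasDerivAt (fun u => (U u).1) U'.1 x := by
    simpa using h.hasFDerivAt.fst.hasDerivAt
  have snd {U : 𝕜 → 𝕜 × 𝕜} {U'} (h : HasDerivAt U U' x) :
      HasDerivAt (fun u => (U u).2) U'.2 x := by
    simpa using h.hasFDerivAt.snd.hasDerivAt
  refine (((fst hV).mul (snd hW)).sub ((snd hV).mul (fst hW))).congr_deriv ?_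
  simp only [_root_.wedge]
  ring

theorem HasDerivAt.wedge_of_linear {V W : 𝕜 → 𝕜 × 𝕜} {A : 𝕜 × 𝕜 →L[𝕜] 𝕜 × 𝕜} {x : 𝕜}
    (hV : HasDerivAt V (A (V x)) x) (hW : HasDerivAt W (A (W x)) x) :
    HasDerivAt (fun u => _root_.wedge (V u) (W u))
      (LinearMap.trace 𝕜 (𝕜 × 𝕜) (A : 𝕜 × 𝕜 →ₗ[𝕜] 𝕜 × 𝕜) * _root_.wedge (V x) (W x)) x := by
  rw [← wedge_map_add_wedge_map]
  exact hV.wedge hW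

variable {S E F : Type*} [NormedAddCommGroup S] [NormedSpace 𝕜 S]
  [NormedAddCommGroup E] [NormedSpace 𝕜 E] [NormedAddCommGroup F] [NormedSpace 𝕜 F]

theorem fderiv_eq_comp_inr_of_differentiable_uncurry {G : S → E → F}
    (hG : Differentiable 𝕜 (Function.uncurry G)) (u : S) (x : E) :
    fderiv 𝕜 (G u) x = (fderiv 𝕜 (Function.uncurry G) (u, x)).comp (.inr 𝕜 S E) :=
  ((hG (u, x)).hasFDerivAt.comp x (hasFDerivAt_prodMk_right u x)).fderiv

theorem continuous_fderiv_of_contDiff_uncurry {G : S → E → F}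
    (hG : ContDiff 𝕜 1 (Function.uncurry G)) :
    Continuous fun p : S × E => fderiv 𝕜 (G p.1) p.2 := by
  simp only [fderiv_eq_comp_inr_of_differentiable_uncurry (hG.differentiable one_ne_zero)]
  exact (hG.continuous_fderiv one_ne_zero).clm_comp continuous_const

end Derivatives

theorem Continuous.trace {𝕜 T E : Type*} [NontriviallyNormedField 𝕜] [CompleteSpace 𝕜]
    [TopologicalSpace T] [NormedAddCommGroup E] [NormedSpace 𝕜 E] [FiniteDimensional 𝕜 E]
    {A : T → E →L[𝕜] E} (hA : Continuous A) :
    Continuous fun u => LinearMap.trace 𝕜 E (A u : E →ₗ[𝕜] E) :=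
  (LinearMap.trace 𝕜 E ∘ₗ ContinuousLinearMap.coeLM 𝕜).continuous_of_finiteDimensional.comp hA

theorem eq_mul_exp_integral_of_hasDerivAt {a D : ℝ → ℝ} (ha : Continuous a)
    (hD : ∀ u, HasDerivAt D (a u * D u) u) (τ t : ℝ) :
    D t = D τ * exp (∫ u in τ..t, a u) := by
  set I : ℝ → ℝ := fun v => ∫ u in τ..v, a u
  have hI : ∀ u, HasDerivAt I (a u) u := fun u => (ha.integral_hasStrictDerivAt τ u).hasDerivAt
  have hconst : ∀ u, HasDerivAt (fun v => D v * exp (-I v)) 0 u := by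
    intro u
    refine ((hD u).mul (hI u).neg.exp).congr_deriv ?_
    simp only [Pi.neg_apply]
    ring
  have key := is_const_of_deriv_eq_zero (fun u => (hconst u).differentiableAt)
    (fun u => (hconst u).deriv) t τ
  simp only [I, intervalIntegral.integral_same, neg_zero, exp_zero, mul_one] at key
  rw [← key, mul_assoc, ← exp_add, neg_add_cancel, exp_zero, mul_one]

theorem stmt5_general (G : ℝ → ℝ × ℝ → ℝ × ℝ)
    (hG : ContDiff ℝ 1 fun p : ℝ × (ℝ × ℝ) => G p.1 p.2)
    (X : ℝ → ℝ → ℝ × ℝ → ℝ × ℝ)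
    (hXode : ∀ τ y t, HasDerivAt (fun u => X u τ y) (G t (X t τ y)) t)
    (σ : ℝ → ℝ × ℝ) (σ' : ℝ → ℝ × ℝ)
    (τ s : ℝ)
    (V₁ V₂ : ℝ → ℝ × ℝ)
    (hV₁ : ∀ u, HasDerivAt V₁ (fderiv ℝ (G u) (X u τ (σ s)) (V₁ u)) u)
    (hV₂ : ∀ u, HasDerivAt V₂ (fderiv ℝ (G u) (X u τ (σ s)) (V₂ u)) u)
    (hV₁init : V₁ τ = -G τ (σ s))
    (hV₂init : V₂ τ = σ' s) :
    ∀ t, τ ≤ t →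
      |(V₁ t).1 * (V₂ t).2 - (V₁ t).2 * (V₂ t).1| =
        |(G τ (σ s)).1 * (σ' s).2 - (G τ (σ s)).2 * (σ' s).1| *
          Real.exp (∫ u in τ..t,
            LinearMap.trace ℝ (ℝ × ℝ)
              ((fderiv ℝ (G u) (X u τ (σ s))) : (ℝ × ℝ) →ₗ[ℝ] ℝ × ℝ)) := by
  intro t _
  have hX : Continuous fun u => X u τ (σ s) :=
    continuous_iff_continuousAt.2 fun u => (hXode τ (σ s) u).continuousAt
  have hA : Continuous fun u => fderiv ℝ (G u) (X u τ (σ s)) :=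
    (continuous_fderiv_of_contDiff_uncurry hG).comp (continuous_id.prodMk hX)
  have hW := eq_mul_exp_integral_of_hasDerivAt hA.trace
    (fun u => (hV₁ u).wedge_of_linear (hV₂ u)) τ t
  simp only [wedge, hV₁init, hV₂init, Prod.fst_neg, Prod.snd_neg] at hW
  rw [hW, abs_mul, abs_of_pos (exp_pos _), ← abs_neg]
  congr 2
  ring

/-- **Jacobian formula along characteristics.** Let `G` be a `C¹` field on `ℝ × ℝ²`, `X` its flow,
`σ` a `C¹` boundary curve parametrized by arclength with derivative `σ'` (so the normal is
`ν = (σ'₂, -σ'₁)`). If `V₁, V₂` solve the variational equation along `u ↦ X(u;τ,σ(s))` with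
initial conditions `V₁(τ) = -G(τ,σ(s))` and `V₂(τ) = σ'(s)`, then for all `t ≥ τ` the Jacobian
`J₁(t) = |det[V₁(t),V₂(t)]|` equals `|G(τ,σ(s))·ν(s)| · exp (∫_τ^t div G(u, X(u;τ,σ(s))) du)`. -/
theorem stmt5 (G : ℝ → ℝ × ℝ → ℝ × ℝ)
    (hG : ContDiff ℝ 1 fun p : ℝ × (ℝ × ℝ) => G p.1 p.2)
    (X : ℝ → ℝ → ℝ × ℝ → ℝ × ℝ)
    (hXinit : ∀ τ y, X τ τ y = y)
    (hXode : ∀ τ y t, HasDerivAt (fun u => X u τ y) (G t (X t τ y)) t)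
    (σ : ℝ → ℝ × ℝ) (σ' : ℝ → ℝ × ℝ)
    (hσ : ∀ s ∈ Set.Icc (0:ℝ) 1, HasDerivAt σ (σ' s) s)
    (hσ' : ∀ s ∈ Set.Icc (0:ℝ) 1, Real.sqrt ((σ' s).1 ^ 2 + (σ' s).2 ^ 2) = 1)
    (τ s : ℝ) (hs : s ∈ Set.Icc (0:ℝ) 1)
    (V₁ V₂ : ℝ → ℝ × ℝ)
    (hV₁ : ∀ u, HasDerivAt V₁ (fderiv ℝ (G u) (X u τ (σ s)) (V₁ u)) u)
    (hV₂ : ∀ u, HasDerivAt V₂ (fderiv ℝ (G u) (X u τ (σ s)) (V₂ u)) u)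
    (hV₁init : V₁ τ = -G τ (σ s))
    (hV₂init : V₂ τ = σ' s) :
    ∀ t, τ ≤ t →
      |(V₁ t).1 * (V₂ t).2 - (V₁ t).2 * (V₂ t).1| =
        |(G τ (σ s)).1 * (σ' s).2 - (G τ (σ s)).2 * (σ' s).1| *
          Real.exp (∫ u in τ..t,
            LinearMap.trace ℝ (ℝ × ℝ)
              ((fderiv ℝ (G u) (X u τ (σ s))) : (ℝ × ℝ) →ₗ[ℝ] ℝ × ℝ)) :=
  stmt5_general G hG X hXode σ σ' τ s V₁ V₂ hV₁ hV₂ hV₁init hV₂init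
end

section
/- Consider the lagrangian scheme: integers K, M, L ≥ 1; steps δt, δσ, δx > 0 with t_k = k·δt; data N_j (1 ≤ j ≤ M), f_j^k (1 ≤ j ≤ M, 0 ≤ k ≤ K+1), β¹_{i,j} (i ≥ 1, 1 ≤ j ≤ M), β²_{l,m} and ρ₂⁰(l,m) (1 ≤ l,m ≤ L). Set ρ₂^k(l,m) = ρ₂⁰(l,m) for all k, and define ρ₁^k(i,j) (1 ≤ i ≤ k ≤ K+1, 1 ≤ j ≤ M) recursively by ρ₁^{k+1}(i,j) = ρ₁^k(i,j) for 1 ≤ i ≤ k and ρ₁^{k+1}(k+1,j) = N_j·B^{k+1} + f_j^{k+1}, where B^{k+1} = Σ_{i=1}^{k} Σ_{j'=1}^{M} β¹_{i,j'} ρ₁^{k+1}(i,j') δt δσ + Σ_{l,m=1}^{L} β²_{l,m} ρ₂⁰(l,m) (δx)². If ρ₂⁰(l,m) ≥ 0, N_j ≥ 0, f_j^k ≥ 0, β¹_{i,j} ≥ 0 and β²_{l,m} ≥ 0 for all indices, then ρ₁^k(i,j) ≥ 0 for all 1 ≤ i ≤ k ≤ K+1 and 1 ≤ j ≤ M. 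-/
/-!
The scheme is explicit: at step `k + 1` the old cells are copied and the newborn cell is
`N_j B^{k+1} + f_j^{k+1}`, where the birth rate `B^{k+1}` only involves already known
(copied) cells with nonnegative weights. Induction on `k` therefore propagates nonnegativity.
-/

open Finset

theorem nonneg_of_copy_of_newborn_nonneg {K M : ℕ} {ρ : ℕ → ℕ → ℕ → ℝ}
    (hcopy : ∀ k ≤ K, ∀ i, 1 ≤ i → i ≤ k → ∀ j, 1 ≤ j → j ≤ M → ρ (k + 1) i j = ρ k i j)
    (hnewborn : ∀ k ≤ K, (∀ i, 1 ≤ i → i ≤ k → ∀ j, 1 ≤ j → j ≤ M → 0 ≤ ρ (k + 1) i j) →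
      ∀ j, 1 ≤ j → j ≤ M → 0 ≤ ρ (k + 1) (k + 1) j) :
    ∀ k i j, 1 ≤ i → i ≤ k → k ≤ K + 1 → 1 ≤ j → j ≤ M → 0 ≤ ρ k i j := by
  intro k
  induction k with
  | zero => intro i j hi hik; omega
  | succ k ih =>
    intro i j hi hik hkK hj hjM
    have hk : k ≤ K := by omega
    have hcopied : ∀ i, 1 ≤ i → i ≤ k → ∀ j, 1 ≤ j → j ≤ M → 0 ≤ ρ (k + 1) i j :=
      fun i hi hik j hj hjM => hcopy k hk i hi hik j hj hjM ▸ ih i j hi hik (by omega) hj hjM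
    rcases (show i ≤ k ∨ i = k + 1 by omega) with hik | rfl
    · exact hcopied i hi hik j hj hjM
    · exact hnewborn k hk hcopied j hj hjM

theorem sum_Icc_sum_Icc_nonneg {m n p q : ℕ} {g : ℕ → ℕ → ℝ}
    (hg : ∀ a b, m ≤ a → a ≤ n → p ≤ b → b ≤ q → 0 ≤ g a b) :
    0 ≤ ∑ a ∈ Icc m n, ∑ b ∈ Icc p q, g a b :=
  sum_nonneg fun a ha => sum_nonneg fun b hb =>
    hg a b (mem_Icc.1 ha).1 (mem_Icc.1 ha).2 (mem_Icc.1 hb).1 (mem_Icc.1 hb).2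

theorem stmt9_general (K M L : ℕ)
    (δt δσ δx : ℝ) (hδt : 0 < δt) (hδσ : 0 < δσ)
    (N : ℕ → ℝ) (f : ℕ → ℕ → ℝ) (β₁ : ℕ → ℕ → ℝ) (β₂ ρ₂0 : ℕ → ℕ → ℝ)
    (ρ₁ : ℕ → ℕ → ℕ → ℝ)
    (hrec : ∀ k ≤ K, ∀ i, 1 ≤ i → i ≤ k → ∀ j, 1 ≤ j → j ≤ M →
      ρ₁ (k + 1) i j = ρ₁ k i j)
    (hbdry : ∀ k ≤ K, ∀ j, 1 ≤ j → j ≤ M →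
      ρ₁ (k + 1) (k + 1) j =
        N j * ((∑ i ∈ Finset.Icc 1 k, ∑ j' ∈ Finset.Icc 1 M,
                  β₁ i j' * ρ₁ (k + 1) i j' * δt * δσ) +
               ∑ l ∈ Finset.Icc 1 L, ∑ m ∈ Finset.Icc 1 L,
                  β₂ l m * ρ₂0 l m * δx ^ 2) + f j (k + 1))
    (hρ₂0 : ∀ l m, 1 ≤ l → l ≤ L → 1 ≤ m → m ≤ L → 0 ≤ ρ₂0 l m)
    (hN : ∀ j, 1 ≤ j → j ≤ M → 0 ≤ N j)
    (hf : ∀ j k, 1 ≤ j → j ≤ M → k ≤ K + 1 → 0 ≤ f j k)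
    (hβ₁ : ∀ i j, 1 ≤ i → 1 ≤ j → j ≤ M → 0 ≤ β₁ i j)
    (hβ₂ : ∀ l m, 1 ≤ l → l ≤ L → 1 ≤ m → m ≤ L → 0 ≤ β₂ l m) :
    ∀ k i j, 1 ≤ i → i ≤ k → k ≤ K + 1 → 1 ≤ j → j ≤ M → 0 ≤ ρ₁ k i j := by
  refine nonneg_of_copy_of_newborn_nonneg hrec fun k hk hcopied j hj hjM => ?_
  have hβ₁ρ₁ : 0 ≤ ∑ i ∈ Icc 1 k, ∑ j' ∈ Icc 1 M, β₁ i j' * ρ₁ (k + 1) i j' * δt * δσ :=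
    sum_Icc_sum_Icc_nonneg fun i j' hi hik hj' hj'M => by
      have := hβ₁ i j' hi hj' hj'M
      have := hcopied i hi hik j' hj' hj'M
      positivity
  have hβ₂ρ₂ : 0 ≤ ∑ l ∈ Icc 1 L, ∑ m ∈ Icc 1 L, β₂ l m * ρ₂0 l m * δx ^ 2 :=
    sum_Icc_sum_Icc_nonneg fun l m hl hlL hm hmL => by
      have := hβ₂ l m hl hlL hm hmL
      have := hρ₂0 l m hl hlL hm hmL
      positivity
  rw [hbdry k hk j hj hjM]
  have := hN j hj hjM
  have := hf j (k + 1) hj hjM (by omega)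
  positivity

/-- **Positivity of the lagrangian scheme.** With nonnegative data `ρ₂⁰, N, f, β¹, β²`, the
values `ρ₁^k(i,j)` produced by the lagrangian scheme are nonnegative for all
`1 ≤ i ≤ k ≤ K+1`, `1 ≤ j ≤ M`. -/
theorem stmt9 (K M L : ℕ) (hK : 1 ≤ K) (hM : 1 ≤ M) (hL : 1 ≤ L)
    (δt δσ δx : ℝ) (hδt : 0 < δt) (hδσ : 0 < δσ) (hδx : 0 < δx)
    (N : ℕ → ℝ) (f : ℕ → ℕ → ℝ) (β₁ : ℕ → ℕ → ℝ) (β₂ ρ₂0 : ℕ → ℕ → ℝ)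
    (ρ₁ : ℕ → ℕ → ℕ → ℝ)
    (hrec : ∀ k ≤ K, ∀ i, 1 ≤ i → i ≤ k → ∀ j, 1 ≤ j → j ≤ M →
      ρ₁ (k + 1) i j = ρ₁ k i j)
    (hbdry : ∀ k ≤ K, ∀ j, 1 ≤ j → j ≤ M →
      ρ₁ (k + 1) (k + 1) j =
        N j * ((∑ i ∈ Finset.Icc 1 k, ∑ j' ∈ Finset.Icc 1 M,
                  β₁ i j' * ρ₁ (k + 1) i j' * δt * δσ) +
               ∑ l ∈ Finset.Icc 1 L, ∑ m ∈ Finset.Icc 1 L,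
                  β₂ l m * ρ₂0 l m * δx ^ 2) + f j (k + 1))
    (hρ₂0 : ∀ l m, 1 ≤ l → l ≤ L → 1 ≤ m → m ≤ L → 0 ≤ ρ₂0 l m)
    (hN : ∀ j, 1 ≤ j → j ≤ M → 0 ≤ N j)
    (hf : ∀ j k, 1 ≤ j → j ≤ M → k ≤ K + 1 → 0 ≤ f j k)
    (hβ₁ : ∀ i j, 1 ≤ i → 1 ≤ j → j ≤ M → 0 ≤ β₁ i j)
    (hβ₂ : ∀ l m, 1 ≤ l → l ≤ L → 1 ≤ m → m ≤ L → 0 ≤ β₂ l m) :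
    ∀ k i j, 1 ≤ i → i ≤ k → k ≤ K + 1 → 1 ≤ j → j ≤ M → 0 ≤ ρ₁ k i j :=
  stmt9_general K M L δt δσ δx hδt hδσ N f β₁ β₂ ρ₂0 ρ₁ hrec hbdry hρ₂0 hN hf hβ₁ hβ₂
end

section
/- Consider the lagrangian scheme: integers K, M, L ≥ 1; steps δt, δσ, δx > 0 with t_k = k·δt; data N_j (1 ≤ j ≤ M), f_j^k (1 ≤ j ≤ M, 0 ≤ k ≤ K+1), β¹_{i,j} (i ≥ 1, 1 ≤ j ≤ M), β²_{l,m} and ρ₂⁰(l,m) (1 ≤ l,m ≤ L). Set ρ₂^k(l,m) = ρ₂⁰(l,m) for all k, and define ρ₁^k(i,j) (1 ≤ i ≤ k ≤ K+1, 1 ≤ j ≤ M) recursively by ρ₁^{k+1}(i,j) = ρ₁^k(i,j) for 1 ≤ i ≤ k and ρ₁^{k+1}(k+1,j) = N_j·B^{k+1} + f_j^{k+1}, where B^{k+1} = Σ_{i=1}^{k} Σ_{j'=1}^{M} β¹_{i,j'} ρ₁^{k+1}(i,j') δt δσ + Σ_{l,m=1}^{L} β²_{l,m} ρ₂⁰(l,m)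 (δx)². Suppose N_j ≥ 0, |β¹_{i,j}| ≤ B_β and |β²_{l,m}| ≤ B_β for a constant B_β > 0, Σ_{j=1}^M N_j δσ ≤ ν_h for a constant ν_h > 0, and Σ_{j=1}^M |f_j^k| δσ ≤ φ_h for every k. Then for every 1 ≤ k ≤ K+1: Σ_{i=1}^{k} Σ_{j=1}^{M} |ρ₁^k(i,j)| δt δσ ≤ e^{t_k·B_β·ν_h}·( Σ_{l,m=1}^{L} |ρ₂⁰(l,m)| (δx)² + φ_h/(B_β·ν_h) ). -/
/-!
Write `S_k` for the discrete L¹ norm of `ρ₁^k`, `C` for that of `ρ₂⁰` and `D = C + φ_h/(B_β ν_h)`.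
Passing from `k` to `k+1` keeps the first `k` rows and adds the boundary row
`N_j B^{k+1} + f_j^{k+1}`, whose L¹ norm is at most `δt (ν_h |B^{k+1}| + φ_h)`, while
`|B^{k+1}| ≤ B_β (S_k + C)`. Hence `S_{k+1} + D ≤ (1 + δt B_β ν_h) (S_k + D)`, and discrete
Grönwall with `S_0 = 0` gives `S_k + D ≤ e^{t_k B_β ν_h} D`.
-/

open Finset Real

theorem le_exp_mul_of_succ_le_one_add_mul {u : ℕ → ℝ} {c : ℝ} {n : ℕ}
    (hu : ∀ k < n, 0 ≤ u k) (hstep : ∀ k < n, u (k + 1) ≤ (1 + c) * u k) :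
    u n ≤ exp (n * c) * u 0 := by
  induction n with
  | zero => simp
  | succ n ih =>
    calc u (n + 1) ≤ (1 + c) * u n := hstep n n.lt_succ_self
      _ ≤ exp c * u n := by
        have := add_one_le_exp c
        exact mul_le_mul_of_nonneg_right (by linarith) (hu n n.lt_succ_self)
      _ ≤ exp c * (exp (n * c) * u 0) :=
        mul_le_mul_of_nonneg_left (ih (fun k hk => hu k (by omega))
          (fun k hk => hstep k (by omega))) (exp_pos c).le
      _ = exp ((n + 1 : ℕ) * c) * u 0 := by
        rw [← mul_assoc, ← exp_add]; push_cast; ring_nf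

theorem abs_sum_sum_mul_le {ι κ : Type*} {s : Finset ι} {t : Finset κ} {b x : ι → κ → ℝ}
    {B w : ℝ} (hw : 0 ≤ w) (hb : ∀ i ∈ s, ∀ j ∈ t, |b i j| ≤ B) :
    |∑ i ∈ s, ∑ j ∈ t, b i j * x i j * w| ≤ B * ∑ i ∈ s, ∑ j ∈ t, |x i j| * w := by
  calc |∑ i ∈ s, ∑ j ∈ t, b i j * x i j * w|
      ≤ ∑ i ∈ s, ∑ j ∈ t, |b i j * x i j * w| :=
        (abs_sum_le_sum_abs _ _).trans (sum_le_sum fun i _ => abs_sum_le_sum_abs _ _)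
    _ ≤ ∑ i ∈ s, ∑ j ∈ t, B * (|x i j| * w) := by
        gcongr with i hi j hj
        rw [abs_mul, abs_mul, abs_of_nonneg hw, mul_assoc]
        exact mul_le_mul_of_nonneg_right (hb i hi j hj) (by positivity)
    _ = B * ∑ i ∈ s, ∑ j ∈ t, |x i j| * w := by simp only [mul_sum]

theorem sum_abs_mul_add_mul_le {ι : Type*} {s : Finset ι} {N g : ι → ℝ} {b δt δσ ν φ : ℝ}
    (hδt : 0 ≤ δt) (hδσ : 0 ≤ δσ) (hN : ∀ j ∈ s, 0 ≤ N j)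
    (hNsum : ∑ j ∈ s, N j * δσ ≤ ν) (hg : ∑ j ∈ s, |g j| * δσ ≤ φ) :
    ∑ j ∈ s, |N j * b + g j| * δt * δσ ≤ δt * (ν * |b| + φ) := by
  calc ∑ j ∈ s, |N j * b + g j| * δt * δσ
      ≤ ∑ j ∈ s, δt * ((N j * δσ) * |b| + |g j| * δσ) := by
        refine sum_le_sum fun j hj => ?_
        calc |N j * b + g j| * δt * δσ ≤ (N j * |b| + |g j|) * δt * δσ := by
              gcongr
              exact (abs_add_le _ _).trans_eq (by rw [abs_mul, abs_of_nonneg (hN j hj)])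
          _ = δt * ((N j * δσ) * |b| + |g j| * δσ) := by ring
    _ = δt * ((∑ j ∈ s, N j * δσ) * |b| + ∑ j ∈ s, |g j| * δσ) := by
        rw [← mul_sum, sum_add_distrib, sum_mul]
    _ ≤ δt * (ν * |b| + φ) := by gcongr

theorem lagrangian_l1_succ_le {M L k : ℕ} {δt δσ δx Bβ νh φh : ℝ} {N g : ℕ → ℝ}
    {β₁ β₂ ρ₂0 u v : ℕ → ℕ → ℝ} (hδt : 0 < δt) (hδσ : 0 < δσ) (hνh : 0 ≤ νh)
    (hrec : ∀ i, 1 ≤ i → i ≤ k → ∀ j, 1 ≤ j → j ≤ M → v i j = u i j)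
    (hbdry : ∀ j, 1 ≤ j → j ≤ M →
      v (k + 1) j =
        N j * ((∑ i ∈ Icc 1 k, ∑ j' ∈ Icc 1 M, β₁ i j' * v i j' * δt * δσ) +
               ∑ l ∈ Icc 1 L, ∑ m ∈ Icc 1 L, β₂ l m * ρ₂0 l m * δx ^ 2) + g j)
    (hN : ∀ j, 1 ≤ j → j ≤ M → 0 ≤ N j)
    (hβ₁ : ∀ i j, 1 ≤ i → 1 ≤ j → j ≤ M → |β₁ i j| ≤ Bβ)
    (hβ₂ : ∀ l m, 1 ≤ l → l ≤ L → 1 ≤ m → m ≤ L → |β₂ l m| ≤ Bβ)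
    (hNsum : ∑ j ∈ Icc 1 M, N j * δσ ≤ νh) (hg : ∑ j ∈ Icc 1 M, |g j| * δσ ≤ φh) :
    ∑ i ∈ Icc 1 (k + 1), ∑ j ∈ Icc 1 M, |v i j| * δt * δσ ≤
      (∑ i ∈ Icc 1 k, ∑ j ∈ Icc 1 M, |u i j| * δt * δσ) +
        δt * (νh * (Bβ * ((∑ i ∈ Icc 1 k, ∑ j ∈ Icc 1 M, |u i j| * δt * δσ) +
          ∑ l ∈ Icc 1 L, ∑ m ∈ Icc 1 L, |ρ₂0 l m| * δx ^ 2)) + φh) := by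
  have hvu : ∀ i ∈ Icc 1 k, ∀ j ∈ Icc 1 M, v i j = u i j := fun i hi j hj => by
    rw [mem_Icc] at hi hj; exact hrec i hi.1 hi.2 j hj.1 hj.2
  simp only [mul_assoc _ δt δσ] at hbdry ⊢
  set B := (∑ i ∈ Icc 1 k, ∑ j' ∈ Icc 1 M, β₁ i j' * v i j' * (δt * δσ)) +
    ∑ l ∈ Icc 1 L, ∑ m ∈ Icc 1 L, β₂ l m * ρ₂0 l m * δx ^ 2
  have hold : ∑ i ∈ Icc 1 k, ∑ j ∈ Icc 1 M, |v i j| * (δt * δσ) =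
      ∑ i ∈ Icc 1 k, ∑ j ∈ Icc 1 M, |u i j| * (δt * δσ) :=
    sum_congr rfl fun i hi => sum_congr rfl fun j hj => by rw [hvu i hi j hj]
  have hB : |B| ≤ Bβ * ((∑ i ∈ Icc 1 k, ∑ j ∈ Icc 1 M, |u i j| * (δt * δσ)) +
      ∑ l ∈ Icc 1 L, ∑ m ∈ Icc 1 L, |ρ₂0 l m| * δx ^ 2) := by
    rw [mul_add, ← hold]
    refine (abs_add_le _ _).trans (add_le_add ?_ ?_)
    · refine abs_sum_sum_mul_le (by positivity) fun i hi j hj => ?_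
      rw [mem_Icc] at hi hj
      exact hβ₁ i j hi.1 hj.1 hj.2
    · refine abs_sum_sum_mul_le (by positivity) fun l hl m hm => ?_
      rw [mem_Icc] at hl hm
      exact hβ₂ l m hl.1 hl.2 hm.1 hm.2
  have hrow : ∑ j ∈ Icc 1 M, |v (k + 1) j| * (δt * δσ) ≤ δt * (νh * |B| + φh) := by
    rw [sum_congr rfl fun j hj => by rw [hbdry j (mem_Icc.1 hj).1 (mem_Icc.1 hj).2]]
    simp only [← mul_assoc _ δt δσ]
    exact sum_abs_mul_add_mul_le hδt.le hδσ.le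
      (fun j hj => hN j (mem_Icc.1 hj).1 (mem_Icc.1 hj).2) hNsum hg
  rw [sum_Icc_succ_top (by omega), hold]
  have := mul_le_mul_of_nonneg_left (mul_le_mul_of_nonneg_left hB hνh) hδt.le
  linarith

theorem stmt10_general (K M L : ℕ)
    (δt δσ δx : ℝ) (hδt : 0 < δt) (hδσ : 0 < δσ)
    (N : ℕ → ℝ) (f : ℕ → ℕ → ℝ) (β₁ : ℕ → ℕ → ℝ) (β₂ ρ₂0 : ℕ → ℕ → ℝ)
    (ρ₁ : ℕ → ℕ → ℕ → ℝ)
    (hrec : ∀ k ≤ K, ∀ i, 1 ≤ i → i ≤ k → ∀ j, 1 ≤ j → j ≤ M →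
      ρ₁ (k + 1) i j = ρ₁ k i j)
    (hbdry : ∀ k ≤ K, ∀ j, 1 ≤ j → j ≤ M →
      ρ₁ (k + 1) (k + 1) j =
        N j * ((∑ i ∈ Finset.Icc 1 k, ∑ j' ∈ Finset.Icc 1 M,
                  β₁ i j' * ρ₁ (k + 1) i j' * δt * δσ) +
               ∑ l ∈ Finset.Icc 1 L, ∑ m ∈ Finset.Icc 1 L,
                  β₂ l m * ρ₂0 l m * δx ^ 2) + f j (k + 1))
    (Bβ νh φh : ℝ) (hBβ : 0 < Bβ) (hνh : 0 < νh)
    (hN : ∀ j, 1 ≤ j → j ≤ M → 0 ≤ N j)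
    (hβ₁ : ∀ i j, 1 ≤ i → 1 ≤ j → j ≤ M → |β₁ i j| ≤ Bβ)
    (hβ₂ : ∀ l m, 1 ≤ l → l ≤ L → 1 ≤ m → m ≤ L → |β₂ l m| ≤ Bβ)
    (hNsum : (∑ j ∈ Finset.Icc 1 M, N j * δσ) ≤ νh)
    (hfsum : ∀ k ≤ K + 1, (∑ j ∈ Finset.Icc 1 M, |f j k| * δσ) ≤ φh) :
    ∀ k, 1 ≤ k → k ≤ K + 1 →
      (∑ i ∈ Finset.Icc 1 k, ∑ j ∈ Finset.Icc 1 M, |ρ₁ k i j| * δt * δσ) ≤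
        Real.exp ((k : ℝ) * δt * Bβ * νh) *
          ((∑ l ∈ Finset.Icc 1 L, ∑ m ∈ Finset.Icc 1 L, |ρ₂0 l m| * δx ^ 2) +
            φh / (Bβ * νh)) := by
  intro k _ hk
  set S : ℕ → ℝ := fun n => ∑ i ∈ Icc 1 n, ∑ j ∈ Icc 1 M, |ρ₁ n i j| * δt * δσ
  set C := ∑ l ∈ Icc 1 L, ∑ m ∈ Icc 1 L, |ρ₂0 l m| * δx ^ 2
  have hφh : 0 ≤ φh := (sum_nonneg fun j _ => by positivity).trans (hfsum 0 (by omega))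
  have hD : 0 ≤ C + φh / (Bβ * νh) := by positivity
  have hstep : ∀ n < k, S (n + 1) + (C + φh / (Bβ * νh)) ≤
      (1 + δt * Bβ * νh) * (S n + (C + φh / (Bβ * νh))) := by
    intro n hn
    have hsucc := lagrangian_l1_succ_le hδt hδσ hνh.le (hrec n (by omega)) (hbdry n (by omega)) hN hβ₁ hβ₂
      hNsum (hfsum (n + 1) (by omega))
    have hBν : Bβ * νh * (φh / (Bβ * νh)) = φh := by field_simp
    linear_combination hsucc - δt * hBν
  have hgronwall := le_exp_mul_of_succ_le_one_add_mul
    (u := fun n => S n + (C + φh / (Bβ * νh))) (fun n _ => by positivity) hstep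
  have hS0 : S 0 = 0 := by simp [S]
  simp only [hS0, zero_add] at hgronwall
  rw [show (k : ℝ) * δt * Bβ * νh = k * (δt * Bβ * νh) by ring]
  linarith

/-- **Discrete L¹ a priori estimate for the lagrangian scheme.** Under the bounds
`N_j ≥ 0`, `|β¹|,|β²| ≤ B_β`, `Σ_j N_j δσ ≤ ν_h`, `Σ_j |f_j^k| δσ ≤ φ_h`, the discrete L¹ norm
of `ρ₁` satisfies
`Σ_{i=1}^k Σ_{j=1}^M |ρ₁^k(i,j)| δt δσ ≤ e^{t_k B_β ν_h} (Σ_{l,m} |ρ₂⁰(l,m)| (δx)² + φ_h/(B_β ν_h))`. -/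
theorem stmt10 (K M L : ℕ) (hK : 1 ≤ K) (hM : 1 ≤ M) (hL : 1 ≤ L)
    (δt δσ δx : ℝ) (hδt : 0 < δt) (hδσ : 0 < δσ) (hδx : 0 < δx)
    (N : ℕ → ℝ) (f : ℕ → ℕ → ℝ) (β₁ : ℕ → ℕ → ℝ) (β₂ ρ₂0 : ℕ → ℕ → ℝ)
    (ρ₁ : ℕ → ℕ → ℕ → ℝ)
    (hrec : ∀ k ≤ K, ∀ i, 1 ≤ i → i ≤ k → ∀ j, 1 ≤ j → j ≤ M →
      ρ₁ (k + 1) i j = ρ₁ k i j)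
    (hbdry : ∀ k ≤ K, ∀ j, 1 ≤ j → j ≤ M →
      ρ₁ (k + 1) (k + 1) j =
        N j * ((∑ i ∈ Finset.Icc 1 k, ∑ j' ∈ Finset.Icc 1 M,
                  β₁ i j' * ρ₁ (k + 1) i j' * δt * δσ) +
               ∑ l ∈ Finset.Icc 1 L, ∑ m ∈ Finset.Icc 1 L,
                  β₂ l m * ρ₂0 l m * δx ^ 2) + f j (k + 1))
    (Bβ νh φh : ℝ) (hBβ : 0 < Bβ) (hνh : 0 < νh)
    (hN : ∀ j, 1 ≤ j → j ≤ M → 0 ≤ N j)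
    (hβ₁ : ∀ i j, 1 ≤ i → 1 ≤ j → j ≤ M → |β₁ i j| ≤ Bβ)
    (hβ₂ : ∀ l m, 1 ≤ l → l ≤ L → 1 ≤ m → m ≤ L → |β₂ l m| ≤ Bβ)
    (hNsum : (∑ j ∈ Finset.Icc 1 M, N j * δσ) ≤ νh)
    (hfsum : ∀ k ≤ K + 1, (∑ j ∈ Finset.Icc 1 M, |f j k| * δσ) ≤ φh) :
    ∀ k, 1 ≤ k → k ≤ K + 1 →
      (∑ i ∈ Finset.Icc 1 k, ∑ j ∈ Finset.Icc 1 M, |ρ₁ k i j| * δt * δσ) ≤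
        Real.exp ((k : ℝ) * δt * Bβ * νh) *
          ((∑ l ∈ Finset.Icc 1 L, ∑ m ∈ Finset.Icc 1 L, |ρ₂0 l m| * δx ^ 2) +
            φh / (Bβ * νh)) :=
  stmt10_general K M L δt δσ δx hδt hδσ N f β₁ β₂ ρ₂0 ρ₁ hrec hbdry Bβ νh φh hBβ hνh hN hβ₁ hβ₂
    hNsum hfsum
end

section
/- Let T > 0, b > 1, Ω = (1,b)×(1,b) ⊂ ℝ², and Q̃₁ = {(t,τ,s) : 0 < τ < t < T, 0 < s < 1}. Given ρ⁰ ∈ L∞(Ω), N ∈ L∞(0,1) with N ≥ 0, kernels β̃₁ ∈ L∞((0,T)×(0,T)×(0,1)) and β̃₂ ∈ L∞((0,T)×Ω), and f ∈ L∞((0,T)×(0,1)), there exists a weak solution of the straightened system, i.e. a pair (ρ₁,ρ₂) ∈ L∞(Q̃₁) × L∞((0,T)×Ω) such that: (i) for every C¹ function φ₁ : ℝ³ → ℝ with φ₁(T,τ,s) = 0 for all (τ,s), ∫₀ᵀ ∫₀ᵗ ∫₀¹ ρ₁(t,τ,s) ∂_tφ₁(t,τ,s) ds dτ dt + ∫₀ᵀ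 ∫₀¹ [N(s)·B̃(t) + f(t,s)]·φ₁(t,t,s) ds dt = 0, where B̃(t) = ∫₀ᵗ∫₀¹ β̃₁(t,τ,s) ρ₁(t,τ,s) ds dτ + ∫_Ω β̃₂(t,Y) ρ₂(t,Y) dY; and (ii) for every C¹ function φ₂ : ℝ×ℝ² → ℝ with φ₂(T,·) = 0, ∫₀ᵀ ∫_Ω ρ₂(t,Y) ∂_tφ₂(t,Y) dY dt + ∫_Ω ρ⁰(Y) φ₂(0,Y) dY = 0. -/
/-!
Both unknowns can be written down. Nothing couples `ρ₂` to the rest, so `ρ₂(t, Y) = ρ⁰(Y)`.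
Since `ρ₁` is constant in `t`, the renewal condition forces `ρ₁(t, τ, s) = N(s) B(τ) + f(τ, s)`,
and inserting this ansatz into the definition of `B̃` turns the nonlocal condition into the linear
Volterra equation `B(t) = h(t) + ∫₀ᵗ (K(t, τ) B(τ) + F(t, τ)) dτ`, where `h = ∫_Ω β̃₂ ρ⁰`,
`K = ∫₀¹ β̃₁ N ds` and `F = ∫₀¹ β̃₁ f ds` are bounded. With `M` a bound for `K` and `C` one for
the forcing term, the Picard iterates satisfy `|B_{n+1} - B_n|(t) ≤ C (M t)ⁿ / n!`, so they
converge to a bounded measurable solution. Both weak formulations then reduce, after Fubini (on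
the triangle `τ < t` for `ρ₁`), to the fundamental theorem of calculus in `t` for the test
function.
-/

open MeasureTheory Set Filter Topology

section BoundedIntegrals
variable {α : Type*} [MeasurableSpace α] {μ : Measure α} [IsFiniteMeasure μ] {f : α → ℝ} {C : ℝ}

lemma abs_integral_le_of_abs_le (hf : ∀ x, |f x| ≤ C) : |∫ x, f x ∂μ| ≤ C * μ.real univ := by
  simpa only [Real.norm_eq_abs] using
    norm_integral_le_of_norm_le_const (μ := μ) (f := f) (.of_forall hf)

lemma integrable_of_abs_le (hm : AEStronglyMeasurable f μ) (hf : ∀ x, |f x| ≤ C) :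
    Integrable f μ :=
  .of_bound hm C (.of_forall (p := fun x => ‖f x‖ ≤ C) hf)

lemma abs_mul_le_of_abs_le {a b A B : ℝ} (ha : |a| ≤ A) (hb : |b| ≤ B) : |a * b| ≤ A * B := by
  rw [abs_mul]
  exact mul_le_mul ha hb (abs_nonneg _) ((abs_nonneg _).trans ha)

lemma integral_mul_mul_add_of_abs_le {u v w : α → ℝ} {A B : ℝ} (hu : Measurable u)
    (hv : Measurable v) (hw : Measurable w) (hub : ∀ x, |u x| ≤ A) (hvb : ∀ x, |v x| ≤ B)
    (hwb : ∀ x, |w x| ≤ C) (b : ℝ) :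
    ∫ x, u x * (v x * b + w x) ∂μ = (∫ x, u x * v x ∂μ) * b + ∫ x, u x * w x ∂μ := by
  simp_rw [mul_add, ← mul_assoc]
  rw [integral_add, integral_mul_const]
  · exact integrable_of_abs_le ((hu.mul hv).mul_const b).aestronglyMeasurable
      fun x => abs_mul_le_of_abs_le (abs_mul_le_of_abs_le (hub x) (hvb x)) le_rfl
  · exact integrable_of_abs_le (hu.mul hw).aestronglyMeasurable
      fun x => abs_mul_le_of_abs_le (hub x) (hwb x)

end BoundedIntegrals

instance isFiniteMeasure_restrict_Ioo_prod_Ioo (a b c d : ℝ) :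
    IsFiniteMeasure (volume.restrict (Ioo a b ×ˢ Ioo c d)) :=
  isFiniteMeasure_restrict.2
    ((Metric.isBounded_Ioo a b).prod (Metric.isBounded_Ioo c d)).measure_lt_top.ne

lemma abs_integral_Ioo_le_of_abs_le {F : ℝ → ℝ} {C a b : ℝ} (hab : a ≤ b)
    (hF : ∀ τ, |F τ| ≤ C) : |∫ τ in Ioo a b, F τ| ≤ C * (b - a) := by
  have := norm_setIntegral_le_of_norm_le_const (μ := volume) (s := Ioo a b) (f := F)
    measure_Ioo_lt_top fun τ _ => hF τ
  rwa [Real.volume_real_Ioo_of_le hab, Real.norm_eq_abs] at this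

lemma measurable_integral_of_uncurry {α β : Type*} [MeasurableSpace α] [MeasurableSpace β]
    {μ : Measure α} [SFinite μ] {F : β → α → ℝ} (hF : Measurable fun p : β × α => F p.1 p.2) :
    Measurable fun x => ∫ y, F x y ∂μ :=
  hF.stronglyMeasurable.integral_prod_right'.measurable

lemma measurable_integral_Ioo_zero {F : ℝ → ℝ → ℝ}
    (hF : Measurable fun p : ℝ × ℝ => F p.1 p.2) :
    Measurable fun t => ∫ τ in Ioo 0 t, F t τ := by
  set S := {q : ℝ × ℝ | 0 < q.2 ∧ q.2 < q.1}
  have hS : Measurable fun p : ℝ × ℝ => S.indicator (fun q => F q.1 q.2) p :=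
    hF.indicator ((measurableSet_lt measurable_const measurable_snd).inter
      (measurableSet_lt measurable_snd measurable_fst))
  convert measurable_integral_of_uncurry (μ := volume)
    (F := fun t τ => S.indicator (fun q => F q.1 q.2) (t, τ)) hS using 2 with t
  rw [← integral_indicator measurableSet_Ioo]
  rfl

section TimeDerivative
variable {E : Type*} [NormedAddCommGroup E] [NormedSpace ℝ E] {Φ : ℝ × E → ℝ}

lemma ContDiff.hasDerivAt_fst (hΦ : ContDiff ℝ 1 Φ) (t : ℝ) (y : E) :
    HasDerivAt (fun u => Φ (u, y)) (fderiv ℝ Φ (t, y) (1, 0)) t :=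
  (hΦ.differentiable one_ne_zero (t, y)).hasFDerivAt.comp_hasDerivAt t
    ((hasDerivAt_id t).prodMk (hasDerivAt_const t y))

lemma ContDiff.continuous_deriv_fst (hΦ : ContDiff ℝ 1 Φ) :
    Continuous fun p : ℝ × E => deriv (fun u => Φ (u, p.2)) p.1 := by
  simp_rw [fun p : ℝ × E => (hΦ.hasDerivAt_fst p.1 p.2).deriv]
  exact (hΦ.continuous_fderiv one_ne_zero).clm_apply continuous_const

lemma ContDiff.integral_Ioo_deriv_fst (hΦ : ContDiff ℝ 1 Φ) (y : E) {a c : ℝ} (hac : a ≤ c) :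
    ∫ t in Ioo a c, deriv (fun u => Φ (u, y)) t = Φ (c, y) - Φ (a, y) := by
  rw [← integral_Ioc_eq_integral_Ioo, ← intervalIntegral.integral_of_le hac]
  exact intervalIntegral.integral_eq_sub_of_hasDerivAt
    (fun t _ => (hΦ.hasDerivAt_fst t y).differentiableAt.hasDerivAt)
    ((hΦ.continuous_deriv_fst.comp (continuous_id.prodMk continuous_const)).intervalIntegrable a c)

end TimeDerivative

lemma integral_Ioo_integral_Ioo_swap {E : Type*} [NormedAddCommGroup E] [NormedSpace ℝ E]
    {a c : ℝ} {F : ℝ → ℝ → E}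
    (hF : Integrable (Function.uncurry F)
      ((volume.restrict (Ioo a c)).prod (volume.restrict (Ioo a c)))) :
    ∫ t in Ioo a c, ∫ τ in Ioo a t, F t τ = ∫ τ in Ioo a c, ∫ t in Ioo τ c, F t τ := by
  set G : ℝ → ℝ → E := fun t τ => (Iio t).indicator (F t) τ
  have hleft : ∀ t ∈ Ioo a c, ∫ τ in Ioo a t, F t τ = ∫ τ in Ioo a c, G t τ := fun t ht => by
    rw [integral_indicator measurableSet_Iio, Measure.restrict_restrict measurableSet_Iio,
      Iio_inter_Ioo, min_eq_left ht.2.le]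
  have hright : ∀ τ ∈ Ioo a c, ∫ t in Ioo τ c, F t τ = ∫ t in Ioo a c, G t τ := fun τ hτ => by
    have hG : (fun t => G t τ) = (Ioi τ).indicator (fun t => F t τ) := by
      ext t
      by_cases h : τ < t <;> simp [G, h]
    have hI : Ioi τ ∩ Ioo a c = Ioo τ c := by
      ext t
      exact ⟨fun ⟨h1, _, h2⟩ => ⟨h1, h2⟩, fun ⟨h1, h2⟩ => ⟨h1, hτ.1.trans h1, h2⟩⟩
    rw [hG, integral_indicator measurableSet_Ioi, Measure.restrict_restrict measurableSet_Ioi, hI]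
  rw [setIntegral_congr_fun measurableSet_Ioo hleft,
    setIntegral_congr_fun measurableSet_Ioo hright]
  exact integral_integral_swap (hF.indicator (measurableSet_lt measurable_snd measurable_fst))

section WeakFormulation
variable {α : Type*} [NormedAddCommGroup α] [NormedSpace ℝ α] [MeasurableSpace α] [BorelSpace α]
  [SecondCountableTopology α] {μ : Measure α} [IsFiniteMeasure μ] {K : Set α}

lemma integral_Ioo_integral_mul_deriv_fst (hK : IsCompact K) (hμK : ∀ᵐ x ∂μ, x ∈ K)
    {g : α → ℝ} (hgm : AEStronglyMeasurable g μ) {C : ℝ} (hg : ∀ x, |g x| ≤ C)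
    {Φ : ℝ × α → ℝ} (hΦ : ContDiff ℝ 1 Φ) {a c : ℝ} (hac : a ≤ c) :
    ∫ t in Ioo a c, ∫ x, g x * deriv (fun u => Φ (u, x)) t ∂μ
      = ∫ x, g x * (Φ (c, x) - Φ (a, x)) ∂μ := by
  obtain ⟨D, hD⟩ := (isCompact_Icc.prod hK).exists_bound_of_continuousOn
    hΦ.continuous_deriv_fst.continuousOn (s := Icc a c ×ˢ K)
  have hmem : ∀ᵐ p ∂(volume.restrict (Ioo a c)).prod μ, p ∈ Icc a c ×ˢ K :=
    (Measure.quasiMeasurePreserving_fst.ae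
      (ae_restrict_of_forall_mem measurableSet_Ioo fun _ ht => Ioo_subset_Icc_self ht)).and
      (Measure.quasiMeasurePreserving_snd.ae hμK)
  have hint : Integrable (Function.uncurry fun t x => g x * deriv (fun u => Φ (u, x)) t)
      ((volume.restrict (Ioo a c)).prod μ) := by
    refine .of_bound (hgm.comp_snd.mul hΦ.continuous_deriv_fst.aestronglyMeasurable) (C * D) ?_
    filter_upwards [hmem] with p hp
    exact norm_mul_le_of_le (hg p.2) (hD p hp)
  rw [integral_integral_swap hint]
  refine integral_congr_ae (Eventually.of_forall fun x => ?_)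
  dsimp only
  rw [integral_const_mul, hΦ.integral_Ioo_deriv_fst x hac]

lemma integral_Ioo_integral_Ioo_integral_mul_deriv_fst (hK : IsCompact K)
    (hμK : ∀ᵐ x ∂μ, x ∈ K) {g : ℝ → α → ℝ} (hgm : Measurable fun p : ℝ × α => g p.1 p.2)
    {C : ℝ} (hg : ∀ τ x, |g τ x| ≤ C) {φ : ℝ → ℝ → α → ℝ}
    (hφ : ContDiff ℝ 1 fun p : ℝ × ℝ × α => φ p.1 p.2.1 p.2.2) (a c : ℝ) :
    ∫ t in Ioo a c, ∫ τ in Ioo a t, ∫ x, g τ x * deriv (fun u => φ u τ x) t ∂μ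
      = ∫ τ in Ioo a c, ∫ x, g τ x * (φ c τ x - φ τ τ x) ∂μ := by
  have hD : Continuous fun q : (ℝ × ℝ) × α => deriv (fun u => φ u q.1.2 q.2) q.1.1 :=
    hφ.continuous_deriv_fst.comp
      (continuous_fst.fst.prodMk (continuous_fst.snd.prodMk continuous_snd))
  obtain ⟨D, hDb⟩ := ((isCompact_Icc.prod isCompact_Icc).prod hK).exists_bound_of_continuousOn
    hD.continuousOn (s := (Icc a c ×ˢ Icc a c) ×ˢ K)
  have hmem : ∀ᵐ p ∂(volume.restrict (Ioo a c)).prod (volume.restrict (Ioo a c)),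
      p ∈ Icc a c ×ˢ Icc a c := by
    rw [Measure.prod_restrict]
    exact (ae_restrict_mem (measurableSet_Ioo.prod measurableSet_Ioo)).mono
      fun _ hp => prod_mono Ioo_subset_Icc_self Ioo_subset_Icc_self hp
  have hint : Integrable
      (Function.uncurry fun t τ => ∫ x, g τ x * deriv (fun u => φ u τ x) t ∂μ)
      ((volume.restrict (Ioo a c)).prod (volume.restrict (Ioo a c))) := by
    refine .of_bound (measurable_integral_of_uncurry ((hgm.comp
      (measurable_fst.snd.prodMk measurable_snd)).mul hD.measurable)).aestronglyMeasurable
      (C * D * μ.real univ) ?_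
    filter_upwards [hmem] with p hp
    refine norm_integral_le_of_norm_le_const ?_
    filter_upwards [hμK] with x hx
    exact norm_mul_le_of_le (hg p.2 x) (hDb (p, x) ⟨hp, hx⟩)
  rw [integral_Ioo_integral_Ioo_swap hint]
  refine setIntegral_congr_fun measurableSet_Ioo fun τ hτ => ?_
  exact integral_Ioo_integral_mul_deriv_fst hK hμK
    (hgm.comp measurable_prodMk_left).aestronglyMeasurable (hg τ)
    (hφ.comp (contDiff_fst.prodMk (contDiff_const.prodMk contDiff_snd))) hτ.2.le

end WeakFormulation

noncomputable def volterraPicard (T : ℝ) (h : ℝ → ℝ) (K : ℝ → ℝ → ℝ) : ℕ → ℝ → ℝ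
  | 0 => 0
  | n + 1 => (Icc 0 T).indicator fun t => h t + ∫ τ in Ioo 0 t, K t τ * volterraPicard T h K n τ

namespace volterraPicard
variable {T C M : ℝ} {h : ℝ → ℝ} {K : ℝ → ℝ → ℝ}

lemma succ_of_mem {t : ℝ} (ht : t ∈ Icc 0 T) (n : ℕ) :
    volterraPicard T h K (n + 1) t = h t + ∫ τ in Ioo 0 t, K t τ * volterraPicard T h K n τ :=
  indicator_of_mem ht _

lemma of_notMem {t : ℝ} (ht : t ∉ Icc 0 T) : ∀ n, volterraPicard T h K n t = 0
  | 0 => rfl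
  | _ + 1 => indicator_of_notMem ht _

lemma measurable (hhm : Measurable h) (hKm : Measurable fun p : ℝ × ℝ => K p.1 p.2) :
    ∀ n, Measurable (volterraPicard T h K n)
  | 0 => measurable_const
  | n + 1 => (hhm.add (measurable_integral_Ioo_zero
      (hKm.mul ((measurable hhm hKm n).comp measurable_snd)))).indicator measurableSet_Icc

lemma exists_bound (hh : ∀ t ∈ Icc 0 T, |h t| ≤ C) (hK : ∀ t τ, |K t τ| ≤ M) :
    ∀ n, ∃ D, ∀ t, |volterraPicard T h K n t| ≤ D
  | 0 => ⟨0, fun t => by simp [volterraPicard]⟩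
  | n + 1 => by
    obtain ⟨D, hD⟩ := exists_bound hh hK n
    have hMD : 0 ≤ M * D := mul_nonneg ((abs_nonneg _).trans (hK 0 0)) ((abs_nonneg _).trans (hD 0))
    refine ⟨|C| + M * D * |T|, fun t => ?_⟩
    by_cases ht : t ∈ Icc 0 T
    · have hint : |∫ τ in Ioo 0 t, K t τ * volterraPicard T h K n τ| ≤ M * D * |T| :=
        (abs_integral_Ioo_le_of_abs_le ht.1 fun τ => abs_mul_le_of_abs_le (hK t τ) (hD τ)).trans
          (mul_le_mul_of_nonneg_left (by linarith [ht.2, le_abs_self T]) hMD)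
      rw [succ_of_mem ht]
      exact (abs_add_le _ _).trans (add_le_add ((hh t ht).trans (le_abs_self C)) hint)
    · rw [of_notMem ht, abs_zero]
      positivity

lemma abs_succ_sub_le (hhm : Measurable h) (hKm : Measurable fun p : ℝ × ℝ => K p.1 p.2)
    (hh : ∀ t ∈ Icc 0 T, |h t| ≤ C) (hK : ∀ t τ, |K t τ| ≤ M) :
    ∀ n, ∀ t ∈ Icc 0 T,
      |volterraPicard T h K (n + 1) t - volterraPicard T h K n t| ≤ C * (M * t) ^ n / n.factorial
  | 0, t, ht => by
    rw [succ_of_mem ht]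
    simpa [volterraPicard] using hh t ht
  | n + 1, t, ht => by
    have hint : ∀ m, IntegrableOn (fun τ => K t τ * volterraPicard T h K m τ) (Ioo 0 t) := by
      intro m
      obtain ⟨D, hD⟩ := exists_bound hh hK m
      exact integrable_of_abs_le ((hKm.comp measurable_prodMk_left).mul
        (measurable hhm hKm m)).aestronglyMeasurable fun τ => abs_mul_le_of_abs_le (hK t τ) (hD τ)
    have hdiff : volterraPicard T h K (n + 2) t - volterraPicard T h K (n + 1) t
        = ∫ τ in Ioo 0 t,
            K t τ * (volterraPicard T h K (n + 1) τ - volterraPicard T h K n τ) := by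
      simp_rw [succ_of_mem ht, add_sub_add_left_eq_sub, mul_sub]
      exact (integral_sub (hint _) (hint _)).symm
    have hbound : ∀ τ ∈ Ioo 0 t,
        ‖K t τ * (volterraPicard T h K (n + 1) τ - volterraPicard T h K n τ)‖
          ≤ C * M ^ (n + 1) / n.factorial * τ ^ n := fun τ hτ =>
      (norm_mul_le_of_le (hK t τ)
        (abs_succ_sub_le hhm hKm hh hK n τ ⟨hτ.1.le, hτ.2.le.trans ht.2⟩)).trans_eq (by ring)
    have hpow : ∫ τ in Ioo 0 t, C * M ^ (n + 1) / n.factorial * τ ^ n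
        = C * (M * t) ^ (n + 1) / (n + 1).factorial := by
      rw [integral_const_mul, ← integral_Ioc_eq_integral_Ioo,
        ← intervalIntegral.integral_of_le ht.1, integral_pow, Nat.factorial_succ]
      push_cast
      field_simp
      ring
    rw [hdiff, ← hpow]
    exact norm_integral_le_of_norm_le
      ((continuous_const.mul (continuous_pow n)).integrableOn_Icc.mono_set Ioo_subset_Icc_self)
      (ae_restrict_of_forall_mem measurableSet_Ioo hbound)

lemma exists_tendsto (hhm : Measurable h) (hKm : Measurable fun p : ℝ × ℝ => K p.1 p.2)
    (hh : ∀ t ∈ Icc 0 T, |h t| ≤ C) (hK : ∀ t τ, |K t τ| ≤ M) :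
    ∃ D, (∀ n t, |volterraPicard T h K n t| ≤ D) ∧
      ∀ t, ∃ L, Tendsto (fun n => volterraPicard T h K n t) atTop (𝓝 L) := by
  have hM : 0 ≤ M := (abs_nonneg _).trans (hK 0 0)
  set d : ℕ → ℝ := fun n => |C| * ((M * |T|) ^ n / n.factorial)
  have hd : Summable d := (Real.summable_pow_div_factorial (M * |T|)).mul_left |C|
  have hd0 : ∀ n, 0 ≤ d n := fun n => by positivity
  have hdist : ∀ t n,
      dist (volterraPicard T h K n t) (volterraPicard T h K (n + 1) t) ≤ d n := by
    intro t n
    by_cases ht : t ∈ Icc 0 T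
    · rw [dist_comm, Real.dist_eq]
      refine (abs_succ_sub_le hhm hKm hh hK n t ht).trans ?_
      simp only [d, ← mul_div_assoc]
      have ht0 : 0 ≤ t := ht.1
      gcongr
      · exact le_abs_self C
      · exact ht.2.trans (le_abs_self T)
    · simpa [of_notMem ht] using hd0 n
  refine ⟨∑' n, d n, fun n t => ?_, fun t => cauchySeq_tendsto_of_complete
    (cauchySeq_of_summable_dist (hd.of_nonneg_of_le (fun _ => dist_nonneg) (hdist t)))⟩
  have hsum := dist_le_range_sum_of_dist_le (f := fun n => volterraPicard T h K n t) n
    fun _ => hdist t _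
  simpa [volterraPicard] using hsum.trans (hd.sum_le_tsum _ fun i _ => hd0 i)

end volterraPicard

theorem exists_volterra_solution {T C M : ℝ} {h : ℝ → ℝ} {K : ℝ → ℝ → ℝ} (hhm : Measurable h)
    (hKm : Measurable fun p : ℝ × ℝ => K p.1 p.2) (hh : ∀ t ∈ Icc 0 T, |h t| ≤ C)
    (hK : ∀ t τ, |K t τ| ≤ M) :
    ∃ B : ℝ → ℝ, Measurable B ∧ (∃ D, ∀ t, |B t| ≤ D) ∧
      ∀ t ∈ Icc 0 T, B t = h t + ∫ τ in Ioo 0 t, K t τ * B τ := by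
  obtain ⟨D, hD, hlim⟩ := volterraPicard.exists_tendsto hhm hKm hh hK
  choose B hB using hlim
  refine ⟨B, measurable_of_tendsto_metrizable' atTop (volterraPicard.measurable hhm hKm)
      (tendsto_pi_nhds.2 hB),
    ⟨D, fun t => le_of_tendsto (hB t).abs (.of_forall fun n => hD n t)⟩, fun t ht => ?_⟩
  have hdom : Tendsto (fun n => ∫ τ in Ioo 0 t, K t τ * volterraPicard T h K n τ) atTop
      (𝓝 (∫ τ in Ioo 0 t, K t τ * B τ)) :=
    tendsto_integral_of_dominated_convergence (fun _ => M * D)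
      (fun n => ((hKm.comp measurable_prodMk_left).mul
        (volterraPicard.measurable hhm hKm n)).aestronglyMeasurable)
      (integrable_const _) (fun n => .of_forall fun τ => norm_mul_le_of_le (hK t τ) (hD n τ))
      (.of_forall fun τ => (hB τ).const_mul (K t τ))
  exact tendsto_nhds_unique ((hB t).comp (tendsto_add_atTop_nat 1))
    ((hdom.const_add (h t)).congr fun n => (volterraPicard.succ_of_mem ht n).symm)

theorem exists_renewal_solution {α : Type*} [MeasurableSpace α] {μ : Measure α}
    [IsFiniteMeasure μ] (T : ℝ) {β : ℝ → ℝ → α → ℝ} {N : α → ℝ} {f : ℝ → α → ℝ} {h : ℝ → ℝ}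
    (hβm : Measurable fun p : ℝ × ℝ × α => β p.1 p.2.1 p.2.2) (hβ : ∃ C, ∀ t τ s, |β t τ s| ≤ C)
    (hNm : Measurable N) (hN : ∃ C, ∀ s, |N s| ≤ C)
    (hfm : Measurable fun p : ℝ × α => f p.1 p.2) (hf : ∃ C, ∀ t s, |f t s| ≤ C)
    (hhm : Measurable h) (hh : ∃ C, ∀ t, |h t| ≤ C) :
    ∃ B : ℝ → ℝ, Measurable B ∧ (∃ C, ∀ t, |B t| ≤ C) ∧ ∀ t ∈ Ioo 0 T,
      B t = (∫ τ in Ioo 0 t, ∫ s, β t τ s * (N s * B τ + f τ s) ∂μ) + h t := by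
  obtain ⟨Cβ, hβ⟩ := hβ
  obtain ⟨CN, hN⟩ := hN
  obtain ⟨Cf, hf⟩ := hf
  obtain ⟨Ch, hh⟩ := hh
  have hβm' : Measurable fun q : (ℝ × ℝ) × α => β q.1.1 q.1.2 q.2 :=
    hβm.comp (measurable_fst.fst.prodMk (measurable_fst.snd.prodMk measurable_snd))
  set K : ℝ → ℝ → ℝ := fun t τ => ∫ s, β t τ s * N s ∂μ
  set F : ℝ → ℝ → ℝ := fun t τ => ∫ s, β t τ s * f τ s ∂μ
  have hKm : Measurable fun p : ℝ × ℝ => K p.1 p.2 :=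
    measurable_integral_of_uncurry (hβm'.mul (hNm.comp measurable_snd))
  have hFm : Measurable fun p : ℝ × ℝ => F p.1 p.2 := measurable_integral_of_uncurry
    (hβm'.mul (hfm.comp (measurable_fst.snd.prodMk measurable_snd)))
  have hK : ∀ t τ, |K t τ| ≤ Cβ * CN * μ.real univ := fun t τ =>
    abs_integral_le_of_abs_le fun s => abs_mul_le_of_abs_le (hβ t τ s) (hN s)
  have hF : ∀ t τ, |F t τ| ≤ Cβ * Cf * μ.real univ := fun t τ =>
    abs_integral_le_of_abs_le fun s => abs_mul_le_of_abs_le (hβ t τ s) (hf τ s)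
  have hH : ∀ t ∈ Icc 0 T,
      |(∫ τ in Ioo 0 t, F t τ) + h t| ≤ Cβ * Cf * μ.real univ * T + Ch := fun t ht =>
    (abs_add_le _ _).trans (add_le_add ((abs_integral_Ioo_le_of_abs_le ht.1 (hF t)).trans
      (by rw [sub_zero]; exact mul_le_mul_of_nonneg_left ht.2 ((abs_nonneg _).trans (hF 0 0))))
      (hh t))
  obtain ⟨B, hBm, ⟨CB, hB⟩, hBeq⟩ :=
    exists_volterra_solution ((measurable_integral_Ioo_zero hFm).add hhm) hKm hH hK
  refine ⟨B, hBm, ⟨CB, hB⟩, fun t ht => ?_⟩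
  have hKB : IntegrableOn (fun τ => K t τ * B τ) (Ioo 0 t) :=
    integrable_of_abs_le ((hKm.comp measurable_prodMk_left).mul hBm).aestronglyMeasurable
      fun τ => abs_mul_le_of_abs_le (hK t τ) (hB τ)
  have hFt : IntegrableOn (F t) (Ioo 0 t) :=
    integrable_of_abs_le (hFm.comp measurable_prodMk_left).aestronglyMeasurable (hF t)
  have hsplit : ∀ τ, ∫ s, β t τ s * (N s * B τ + f τ s) ∂μ = K t τ * B τ + F t τ := fun τ =>
    integral_mul_mul_add_of_abs_le (hβm'.comp (measurable_prodMk_left (x := (t, τ)))) hNm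
      (hfm.comp measurable_prodMk_left) (hβ t τ) hN (hf τ) (B τ)
  simp only [hsplit]
  rw [integral_add hKB hFt, hBeq t (Ioo_subset_Icc_self ht), Pi.add_apply]
  ring

theorem stmt16_general (T b : ℝ) (hT : 0 < T)
    (ρ0 : ℝ × ℝ → ℝ) (N : ℝ → ℝ) (β₁ : ℝ → ℝ → ℝ → ℝ) (β₂ : ℝ → ℝ × ℝ → ℝ) (f : ℝ → ℝ → ℝ)
    (hρ0m : Measurable ρ0) (hρ0bd : ∃ C, ∀ Y, |ρ0 Y| ≤ C)
    (hNm : Measurable N) (hNbd : ∃ C, ∀ s, |N s| ≤ C)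
    (hβ₁m : Measurable fun p : ℝ × ℝ × ℝ => β₁ p.1 p.2.1 p.2.2)
    (hβ₁bd : ∃ C, ∀ t τ s, |β₁ t τ s| ≤ C)
    (hβ₂m : Measurable fun p : ℝ × (ℝ × ℝ) => β₂ p.1 p.2)
    (hβ₂bd : ∃ C, ∀ t Y, |β₂ t Y| ≤ C)
    (hfm : Measurable fun p : ℝ × ℝ => f p.1 p.2)
    (hfbd : ∃ C, ∀ t s, |f t s| ≤ C) :
    ∃ (ρ₁ : ℝ → ℝ → ℝ → ℝ) (ρ₂ : ℝ → ℝ × ℝ → ℝ),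
      Measurable (fun p : ℝ × ℝ × ℝ => ρ₁ p.1 p.2.1 p.2.2) ∧
      (∃ C, ∀ t τ s, |ρ₁ t τ s| ≤ C) ∧
      Measurable (fun p : ℝ × (ℝ × ℝ) => ρ₂ p.1 p.2) ∧
      (∃ C, ∀ t Y, |ρ₂ t Y| ≤ C) ∧
      (∀ φ₁ : ℝ → ℝ → ℝ → ℝ,
        ContDiff ℝ 1 (fun p : ℝ × ℝ × ℝ => φ₁ p.1 p.2.1 p.2.2) →
        (∀ τ s, φ₁ T τ s = 0) →
        (∫ t in Set.Ioo 0 T, ∫ τ in Set.Ioo 0 t, ∫ s in Set.Ioo (0:ℝ) 1,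
            ρ₁ t τ s * deriv (fun u => φ₁ u τ s) t) +
          (∫ t in Set.Ioo 0 T, ∫ s in Set.Ioo (0:ℝ) 1,
            (N s * ((∫ τ in Set.Ioo 0 t, ∫ s' in Set.Ioo (0:ℝ) 1, β₁ t τ s' * ρ₁ t τ s') +
                ∫ Y in Set.Ioo (1:ℝ) b ×ˢ Set.Ioo (1:ℝ) b, β₂ t Y * ρ₂ t Y) +
              f t s) * φ₁ t t s) = 0) ∧
      (∀ φ₂ : ℝ → ℝ × ℝ → ℝ,
        ContDiff ℝ 1 (fun p : ℝ × (ℝ × ℝ) => φ₂ p.1 p.2) →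
        (∀ Y, φ₂ T Y = 0) →
        (∫ t in Set.Ioo 0 T, ∫ Y in Set.Ioo (1:ℝ) b ×ˢ Set.Ioo (1:ℝ) b,
            ρ₂ t Y * deriv (fun u => φ₂ u Y) t) +
          (∫ Y in Set.Ioo (1:ℝ) b ×ˢ Set.Ioo (1:ℝ) b, ρ0 Y * φ₂ 0 Y) = 0) := by
  obtain ⟨C0, hC0⟩ := hρ0bd
  obtain ⟨C2, hC2⟩ := hβ₂bd
  have hhm : Measurable fun t => ∫ Y in Ioo 1 b ×ˢ Ioo 1 b, β₂ t Y * ρ0 Y :=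
    measurable_integral_of_uncurry (hβ₂m.mul (hρ0m.comp measurable_snd))
  obtain ⟨B, hBm, ⟨CB, hB⟩, hBeq⟩ := exists_renewal_solution (μ := volume.restrict (Ioo 0 1)) T
    hβ₁m hβ₁bd hNm hNbd hfm hfbd hhm
    ⟨_, fun t => abs_integral_le_of_abs_le fun Y => abs_mul_le_of_abs_le (hC2 t Y) (hC0 Y)⟩
  obtain ⟨CN, hN⟩ := hNbd
  obtain ⟨Cf, hf⟩ := hfbd
  have hρ₁m : Measurable fun p : ℝ × ℝ => N p.2 * B p.1 + f p.1 p.2 :=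
    ((hNm.comp measurable_snd).mul (hBm.comp measurable_fst)).add hfm
  have hρ₁ : ∀ τ s, |N s * B τ + f τ s| ≤ CN * CB + Cf := fun τ s =>
    (abs_add_le _ _).trans (add_le_add (abs_mul_le_of_abs_le (hN s) (hB τ)) (hf τ s))
  refine ⟨fun _ τ s => N s * B τ + f τ s, fun _ Y => ρ0 Y, hρ₁m.comp measurable_snd,
    ⟨_, fun _ => hρ₁⟩, hρ0m.comp measurable_snd, ⟨C0, fun _ => hC0⟩, fun φ hφ hφT => ?_,
    fun φ hφ hφT => ?_⟩
  · rw [integral_Ioo_integral_Ioo_integral_mul_deriv_fst isCompact_Icc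
      ((ae_restrict_mem measurableSet_Ioo).mono fun _ => (Ioo_subset_Icc_self ·))
      (g := fun τ s => N s * B τ + f τ s) hρ₁m hρ₁ hφ 0 T]
    simp only [hφT, zero_sub, mul_neg, integral_neg, neg_add_eq_zero]
    refine setIntegral_congr_fun measurableSet_Ioo fun t ht => ?_
    simp only [← hBeq t ht]
  · rw [integral_Ioo_integral_mul_deriv_fst (isCompact_Icc.prod isCompact_Icc)
      ((ae_restrict_mem (measurableSet_Ioo.prod measurableSet_Ioo)).mono
        fun _ => (Set.prod_mono Ioo_subset_Icc_self Ioo_subset_Icc_self ·))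
      hρ0m.aestronglyMeasurable hC0 hφ hT.le]
    simp only [hφT, zero_sub, mul_neg, integral_neg, neg_add_cancel]

/-- **Existence of a weak solution for the straightened metastatic system.** Given L∞ data
`ρ⁰` on `Ω = (1,b)²`, `N ≥ 0` on `(0,1)`, bounded measurable kernels `β̃₁, β̃₂` and `f`, there
exists a pair `(ρ₁, ρ₂)` of bounded measurable functions satisfying the weak formulations of
`∂_t ρ̃₁ = 0` with renewal boundary condition `ρ̃₁(t,t,s) = N(s) B̃(t) + f(t,s)` and of
`∂_t ρ̃₂ = 0` with `ρ̃₂(0,·) = ρ⁰`. -/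
theorem stmt16 (T b : ℝ) (hT : 0 < T) (hb : 1 < b)
    (ρ0 : ℝ × ℝ → ℝ) (N : ℝ → ℝ) (β₁ : ℝ → ℝ → ℝ → ℝ) (β₂ : ℝ → ℝ × ℝ → ℝ) (f : ℝ → ℝ → ℝ)
    (hρ0m : Measurable ρ0) (hρ0bd : ∃ C, ∀ Y, |ρ0 Y| ≤ C)
    (hNm : Measurable N) (hNbd : ∃ C, ∀ s, |N s| ≤ C)
    (hNpos : ∀ s ∈ Set.Ioo (0:ℝ) 1, 0 ≤ N s)
    (hβ₁m : Measurable fun p : ℝ × ℝ × ℝ => β₁ p.1 p.2.1 p.2.2)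
    (hβ₁bd : ∃ C, ∀ t τ s, |β₁ t τ s| ≤ C)
    (hβ₂m : Measurable fun p : ℝ × (ℝ × ℝ) => β₂ p.1 p.2)
    (hβ₂bd : ∃ C, ∀ t Y, |β₂ t Y| ≤ C)
    (hfm : Measurable fun p : ℝ × ℝ => f p.1 p.2)
    (hfbd : ∃ C, ∀ t s, |f t s| ≤ C) :
    ∃ (ρ₁ : ℝ → ℝ → ℝ → ℝ) (ρ₂ : ℝ → ℝ × ℝ → ℝ),
      Measurable (fun p : ℝ × ℝ × ℝ => ρ₁ p.1 p.2.1 p.2.2) ∧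
      (∃ C, ∀ t τ s, |ρ₁ t τ s| ≤ C) ∧
      Measurable (fun p : ℝ × (ℝ × ℝ) => ρ₂ p.1 p.2) ∧
      (∃ C, ∀ t Y, |ρ₂ t Y| ≤ C) ∧
      (∀ φ₁ : ℝ → ℝ → ℝ → ℝ,
        ContDiff ℝ 1 (fun p : ℝ × ℝ × ℝ => φ₁ p.1 p.2.1 p.2.2) →
        (∀ τ s, φ₁ T τ s = 0) →
        (∫ t in Set.Ioo 0 T, ∫ τ in Set.Ioo 0 t, ∫ s in Set.Ioo (0:ℝ) 1,
            ρ₁ t τ s * deriv (fun u => φ₁ u τ s) t) +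
          (∫ t in Set.Ioo 0 T, ∫ s in Set.Ioo (0:ℝ) 1,
            (N s * ((∫ τ in Set.Ioo 0 t, ∫ s' in Set.Ioo (0:ℝ) 1, β₁ t τ s' * ρ₁ t τ s') +
                ∫ Y in Set.Ioo (1:ℝ) b ×ˢ Set.Ioo (1:ℝ) b, β₂ t Y * ρ₂ t Y) +
              f t s) * φ₁ t t s) = 0) ∧
      (∀ φ₂ : ℝ → ℝ × ℝ → ℝ,
        ContDiff ℝ 1 (fun p : ℝ × (ℝ × ℝ) => φ₂ p.1 p.2) →
        (∀ Y, φ₂ T Y = 0) →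
        (∫ t in Set.Ioo 0 T, ∫ Y in Set.Ioo (1:ℝ) b ×ˢ Set.Ioo (1:ℝ) b,
            ρ₂ t Y * deriv (fun u => φ₂ u Y) t) +
          (∫ Y in Set.Ioo (1:ℝ) b ×ˢ Set.Ioo (1:ℝ) b, ρ0 Y * φ₂ 0 Y) = 0) :=
  stmt16_general T b hT ρ0 N β₁ β₂ f hρ0m hρ0bd hNm hNbd hβ₁m hβ₁bd hβ₂m hβ₂bd hfm hfbd
end

section
/- Let T > 0, b > 1, Ω = (1,b)×(1,b) ⊂ ℝ², B > 0. Let ρ⁰ ∈ L∞(Ω), let N ∈ L∞(0,1) satisfy N ≥ 0 and ∫₀¹ N(s) ds = 1, let β̃₁ be measurable on (0,T)×(0,T)×(0,1) with |β̃₁| ≤ B, let β̃₂ be measurable on (0,T)×Ω with |β̃₂| ≤ B, and let f ∈ L∞((0,T)×(0,1)). Suppose g ∈ L∞((0,T)×(0,1)) satisfies, for almost every (τ,s) ∈ (0,T)×(0,1), the renewal equation g(τ,s) = N(s)·[ ∫₀^τ ∫₀¹ β̃₁(τ,τ',s') g(τ',s') ds' dτ' + ∫_Ω β̃₂(τ,Y)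 ρ⁰(Y) dY ] + f(τ,s). Then for every t ∈ [0,T]: ∫₀ᵗ ∫₀¹ |g(τ,s)| ds dτ + ‖ρ⁰‖_{L¹(Ω)} ≤ e^{B·t}·‖ρ⁰‖_{L¹(Ω)} + ∫₀ᵗ e^{B·(t−u)} ( ∫₀¹ |f(u,s)| ds ) du. -/
/-!
Write `φ(τ) = ∫₀¹ |g(τ,s)| ds` and `R = ‖ρ⁰‖_{L¹(Ω)}`. Taking absolute values in the renewal
equation and integrating in `s` (using `N ≥ 0`, `∫₀¹ N = 1` and `|β̃ᵢ| ≤ B`) gives, for a.e. `τ`,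
`φ(τ) ≤ B (R + ∫₀^τ φ) + ∫₀¹ |f(τ,·)|`. The claim is the Gronwall bound for this integral
inequality: `x ↦ e^{-Bx} (R + ∫₀^x φ) - ∫₀^x e^{-Bu} ∫₀¹ |f(u,·)| du` is absolutely continuous
with a.e. nonpositive derivative, hence nonincreasing.
-/

open MeasureTheory Set Real

section
variable {α β : Type*} [MeasurableSpace α] [MeasurableSpace β] {μ : Measure α} {ν : Measure β}

theorem abs_integral_mul_le_of_abs_le {w h : α → ℝ} {B : ℝ} (hw : ∀ᵐ x ∂μ, |w x| ≤ B)
    (hh : Integrable h μ) : |∫ x, w x * h x ∂μ| ≤ B * ∫ x, |h x| ∂μ := by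
  rw [← integral_const_mul, ← Real.norm_eq_abs]
  refine norm_integral_le_of_norm_le (f := fun x => w x * h x) (hh.abs.const_mul B) ?_
  filter_upwards [hw] with x hx
  rw [Real.norm_eq_abs, abs_mul]
  exact mul_le_mul_of_nonneg_right hx (abs_nonneg _)

theorem abs_integral_integral_mul_le_of_abs_le {w h : α → β → ℝ} {B : ℝ}
    (hw : ∀ᵐ x ∂μ, ∀ᵐ y ∂ν, |w x y| ≤ B) (hh : ∀ᵐ x ∂μ, Integrable (h x) ν)
    (hint : Integrable (fun x => ∫ y, |h x y| ∂ν) μ) :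
    |∫ x, ∫ y, w x y * h x y ∂ν ∂μ| ≤ B * ∫ x, ∫ y, |h x y| ∂ν ∂μ := by
  rw [← integral_const_mul, ← Real.norm_eq_abs]
  refine norm_integral_le_of_norm_le (hint.const_mul B) ?_
  filter_upwards [hw, hh] with x hwx hhx
  exact abs_integral_mul_le_of_abs_le hwx hhx

theorem integral_abs_le_of_ae_eq_mul_add {N f g : α → ℝ} {k M : ℝ}
    (hg : ∀ᵐ x ∂μ, g x = N x * k + f x) (hN : ∀ᵐ x ∂μ, 0 ≤ N x) (hN1 : ∫ x, N x ∂μ = 1)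
    (hk : |k| ≤ M) (hf : Integrable f μ) : ∫ x, |g x| ∂μ ≤ M + ∫ x, |f x| ∂μ := by
  have hNi : Integrable N μ := .of_integral_ne_zero (by simp [hN1])
  calc ∫ x, |g x| ∂μ ≤ ∫ x, (N x * M + |f x|) ∂μ := by
        refine integral_mono_of_nonneg (.of_forall fun _ => abs_nonneg _)
          ((hNi.mul_const M).add hf.abs) ?_
        filter_upwards [hg, hN] with x hgx hNx
        calc |g x| ≤ |N x * k| + |f x| := hgx ▸ abs_add_le _ _
          _ ≤ N x * M + |f x| := by rw [abs_mul, abs_of_nonneg hNx]; gcongr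
    _ = M + ∫ x, |f x| ∂μ := by
        rw [integral_add (hNi.mul_const M) hf.abs, integral_mul_const, hN1, one_mul]

theorem integrableOn_integral_of_abs_le [SFinite ν] [IsFiniteMeasure ν] {h : α → β → ℝ}
    (hm : Measurable (Function.uncurry h)) {C : ℝ} (hC : ∀ x y, |h x y| ≤ C) {s : Set α}
    (hs : μ s < ⊤) : IntegrableOn (fun x => ∫ y, h x y ∂ν) s μ :=
  .of_bound hs hm.stronglyMeasurable.integral_prod_right'.aestronglyMeasurable (C * ν.real univ)
    (.of_forall fun x => norm_integral_le_of_norm_le_const (.of_forall (hC x)))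

end

theorem gronwall_add_integral_le {K c a b : ℝ} {φ F : ℝ → ℝ} (hab : a ≤ b)
    (hφ : IntervalIntegrable φ volume a b) (hF : IntervalIntegrable F volume a b)
    (hle : ∀ᵐ s, s ∈ Ioo a b → φ s ≤ K * (c + ∫ r in a..s, φ r) + F s) :
    c + ∫ s in a..b, φ s ≤ exp (K * (b - a)) * c + ∫ s in a..b, exp (K * (b - s)) * F s := by
  set w : ℝ → ℝ := fun x =>
    exp (-(K * x)) * (c + ∫ r in a..x, φ r) - ∫ r in a..x, exp (-(K * r)) * F r
  have hexp : ∀ x, HasDerivAt (fun x => exp (-(K * x))) (-K * exp (-(K * x))) x := fun x => by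
    simpa [mul_comm] using ((hasDerivAt_id x).const_mul K).neg.exp
  have hPint : IntervalIntegrable (fun r => exp (-(K * r)) * F r) volume a b :=
    hF.continuousOn_mul (by fun_prop)
  have hw_ac : AbsolutelyContinuousOnInterval w a b := by
    have hΦ := hφ.absolutelyContinuousOnInterval_intervalIntegral left_mem_uIcc
    have hP := hPint.absolutelyContinuousOnInterval_intervalIntegral left_mem_uIcc
    have hE : AbsolutelyContinuousOnInterval (fun x => exp (-(K * x))) a b :=
      ContDiffOn.absolutelyContinuousOnInterval (by fun_prop)
    exact (hE.fun_mul ((contDiffOn_const (c := c)).absolutelyContinuousOnInterval.add hΦ)).sub hP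
  have hw_deriv : ∀ᵐ x, x ∈ Ioo a b → deriv w x ≤ 0 := by
    filter_upwards [hle, hφ.ae_hasDerivAt_integral, hPint.ae_hasDerivAt_integral]
      with x hx hΦx hPx hxab
    have hxab' : x ∈ uIcc a b := Icc_subset_uIcc (Ioo_subset_Icc_self hxab)
    have hw := ((hexp x).fun_mul ((hΦx hxab' a left_mem_uIcc).const_add c)).fun_sub
      (hPx hxab' a left_mem_uIcc)
    rw [hw.deriv]
    have := hx hxab
    have hpos := exp_pos (-(K * x))
    nlinarith
  have hw_le : w b ≤ w a := by
    rw [← sub_nonpos, ← hw_ac.integral_deriv_eq_sub, intervalIntegral.integral_of_le hab,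
      integral_Ioc_eq_integral_Ioo]
    exact integral_nonpos_of_ae ((ae_restrict_iff' measurableSet_Ioo).mpr hw_deriv)
  have hweight : ∫ s in a..b, exp (K * (b - s)) * F s
      = exp (K * b) * ∫ s in a..b, exp (-(K * s)) * F s := by
    rw [← intervalIntegral.integral_const_mul]
    refine intervalIntegral.integral_congr fun s _ => ?_
    simp only [← mul_assoc, ← exp_add]
    ring_nf
  have hexpb : exp (K * b) * exp (-(K * b)) = 1 := by rw [← exp_add]; simp
  have hexpab : exp (K * b) * exp (-(K * a)) = exp (K * (b - a)) := by rw [← exp_add]; ring_nf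
  simp only [w, intervalIntegral.integral_same, add_zero, sub_zero] at hw_le
  rw [hweight]
  have := mul_le_mul_of_nonneg_left hw_le (exp_pos (K * b)).le
  linear_combination this - (c + ∫ r in a..b, φ r) * hexpb + c * hexpab

theorem ae_integral_abs_le_of_renewal {σ Y : Type*} [MeasurableSpace σ] [MeasurableSpace Y]
    {ν : Measure σ} {ω : Measure Y} {T B : ℝ} {N : σ → ℝ} {ρ : Y → ℝ}
    {β₁ : ℝ → ℝ → σ → ℝ} {β₂ : ℝ → Y → ℝ} {f g : ℝ → σ → ℝ}
    (hN : ∀ᵐ s ∂ν, 0 ≤ N s) (hN1 : ∫ s, N s ∂ν = 1)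
    (hβ₁ : ∀ τ ∈ Ioo 0 T, ∀ τ' ∈ Ioo 0 τ, ∀ᵐ s ∂ν, |β₁ τ τ' s| ≤ B)
    (hβ₂ : ∀ τ ∈ Ioo 0 T, ∀ᵐ y ∂ω, |β₂ τ y| ≤ B) (hρ : Integrable ρ ω)
    (hf : ∀ τ, Integrable (f τ) ν) (hg : ∀ τ, Integrable (g τ) ν)
    (hφ : ∀ τ, IntegrableOn (fun τ' => ∫ s, |g τ' s| ∂ν) (Ioo 0 τ))
    (heq : ∀ᵐ τ ∂volume.restrict (Ioo 0 T), ∀ᵐ s ∂ν, g τ s =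
      N s * ((∫ τ' in Ioo 0 τ, ∫ s', β₁ τ τ' s' * g τ' s' ∂ν) + ∫ y, β₂ τ y * ρ y ∂ω) + f τ s) :
    ∀ᵐ τ ∂volume.restrict (Ioo 0 T), ∫ s, |g τ s| ∂ν ≤
      B * ((∫ τ' in Ioo 0 τ, ∫ s, |g τ' s| ∂ν) + ∫ y, |ρ y| ∂ω) + ∫ s, |f τ s| ∂ν := by
  filter_upwards [heq, ae_restrict_mem measurableSet_Ioo] with τ hτ hτT
  refine integral_abs_le_of_ae_eq_mul_add hτ hN hN1 ((abs_add_le _ _).trans ?_) (hf τ)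
  rw [mul_add]
  exact add_le_add (abs_integral_integral_mul_le_of_abs_le
      (ae_restrict_of_forall_mem measurableSet_Ioo (hβ₁ τ hτT)) (.of_forall hg) (hφ τ))
    (abs_integral_mul_le_of_abs_le (hβ₂ τ hτT) hρ)

theorem stmt18_general (T b B : ℝ)
    (ρ0 : ℝ × ℝ → ℝ) (hρ0m : Measurable ρ0) (hρ0bd : ∃ C, ∀ Y, |ρ0 Y| ≤ C)
    (N : ℝ → ℝ)
    (hNpos : ∀ s ∈ Set.Ioo (0:ℝ) 1, 0 ≤ N s)
    (hNint : (∫ s in Set.Ioo (0:ℝ) 1, N s) = 1)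
    (β₁ : ℝ → ℝ → ℝ → ℝ)
    (hβ₁bd : ∀ t ∈ Set.Ioo (0:ℝ) T, ∀ τ ∈ Set.Ioo (0:ℝ) T, ∀ s ∈ Set.Ioo (0:ℝ) 1,
      |β₁ t τ s| ≤ B)
    (β₂ : ℝ → ℝ × ℝ → ℝ)
    (hβ₂bd : ∀ t ∈ Set.Ioo (0:ℝ) T, ∀ Y ∈ Set.Ioo (1:ℝ) b ×ˢ Set.Ioo (1:ℝ) b, |β₂ t Y| ≤ B)
    (f : ℝ → ℝ → ℝ) (hfm : Measurable fun p : ℝ × ℝ => f p.1 p.2)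
    (hfbd : ∃ C, ∀ t s, |f t s| ≤ C)
    (g : ℝ → ℝ → ℝ) (hgm : Measurable fun p : ℝ × ℝ => g p.1 p.2)
    (hgbd : ∃ C, ∀ τ s, |g τ s| ≤ C)
    (heq : ∀ᵐ p ∂(volume.restrict (Set.Ioo 0 T ×ˢ Set.Ioo (0:ℝ) 1)),
      g p.1 p.2 =
        N p.2 * ((∫ τ' in Set.Ioo 0 p.1, ∫ s' in Set.Ioo (0:ℝ) 1, β₁ p.1 τ' s' * g τ' s') +
            ∫ Y in Set.Ioo (1:ℝ) b ×ˢ Set.Ioo (1:ℝ) b, β₂ p.1 Y * ρ0 Y) +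
          f p.1 p.2) :
    ∀ t ∈ Set.Icc (0:ℝ) T,
      (∫ τ in Set.Ioo 0 t, ∫ s in Set.Ioo (0:ℝ) 1, |g τ s|) +
          (∫ Y in Set.Ioo (1:ℝ) b ×ˢ Set.Ioo (1:ℝ) b, |ρ0 Y|) ≤
        Real.exp (B * t) * (∫ Y in Set.Ioo (1:ℝ) b ×ˢ Set.Ioo (1:ℝ) b, |ρ0 Y|) +
          ∫ u in Set.Ioo 0 t, Real.exp (B * (t - u)) * ∫ s in Set.Ioo (0:ℝ) 1, |f u s| := by
  intro t ht
  obtain ⟨Cρ, hCρ⟩ := hρ0bd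
  obtain ⟨Cf, hCf⟩ := hfbd
  obtain ⟨Cg, hCg⟩ := hgbd
  set Ω := Ioo (1:ℝ) b ×ˢ Ioo (1:ℝ) b
  have hρ : IntegrableOn ρ0 Ω :=
    .of_bound ((Metric.isBounded_Ioo 1 b).prod (Metric.isBounded_Ioo 1 b)).measure_lt_top
      hρ0m.aestronglyMeasurable Cρ (.of_forall hCρ)
  have hφ (τ : ℝ) : IntegrableOn (fun τ => ∫ s in Ioo (0:ℝ) 1, |g τ s|) (Ioo 0 τ) :=
    integrableOn_integral_of_abs_le hgm.abs (fun τ s => (abs_abs _).trans_le (hCg τ s))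
      measure_Ioo_lt_top
  have hF : IntegrableOn (fun u => ∫ s in Ioo (0:ℝ) 1, |f u s|) (Ioo 0 t) :=
    integrableOn_integral_of_abs_le hfm.abs (fun u s => (abs_abs _).trans_le (hCf u s))
      measure_Ioo_lt_top
  have heq' := Measure.ae_ae_of_ae_prod (μ := volume.restrict (Ioo (0:ℝ) T))
    (ν := volume.restrict (Ioo (0:ℝ) 1)) (by rwa [Measure.prod_restrict, ← Measure.volume_eq_prod])
  have hrenewal := ae_integral_abs_le_of_renewal (f := f) (g := g)
    (ae_restrict_of_forall_mem measurableSet_Ioo hNpos) hNint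
    (fun τ hτ τ' hτ' => ae_restrict_of_forall_mem measurableSet_Ioo
      (hβ₁bd τ hτ τ' ⟨hτ'.1, hτ'.2.trans hτ.2⟩))
    (fun τ hτ => ae_restrict_of_forall_mem (measurableSet_Ioo.prod measurableSet_Ioo) (hβ₂bd τ hτ))
    hρ (fun u => .of_bound (hfm.comp measurable_prodMk_left).aestronglyMeasurable Cf
      (.of_forall (hCf u)))
    (fun τ => .of_bound (hgm.comp measurable_prodMk_left).aestronglyMeasurable Cg
      (.of_forall (hCg τ))) hφ heq'
  have hgronwall := gronwall_add_integral_le (K := B) (c := ∫ Y in Ω, |ρ0 Y|) ht.1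
    ((intervalIntegrable_iff_integrableOn_Ioo_of_le ht.1).mpr (hφ t))
    ((intervalIntegrable_iff_integrableOn_Ioo_of_le ht.1).mpr hF) ?_
  · simp only [intervalIntegral.integral_of_le ht.1, integral_Ioc_eq_integral_Ioo, sub_zero]
      at hgronwall
    linarith
  filter_upwards [(ae_restrict_iff' measurableSet_Ioo).mp hrenewal] with τ hτ hτt
  rw [intervalIntegral.integral_of_le hτt.1.le, integral_Ioc_eq_integral_Ioo]
  linarith [hτ ⟨hτt.1, hτt.2.trans_le ht.2⟩]

/-- **Continuous L¹ a priori estimate for the renewal equation.** If `g ∈ L∞((0,T)×(0,1))`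
satisfies the renewal equation
`g(τ,s) = N(s) (∫₀^τ ∫₀¹ β̃₁ g + ∫_Ω β̃₂ ρ⁰) + f(τ,s)` a.e., with `N ≥ 0`, `∫₀¹ N = 1` and
`|β̃₁|, |β̃₂| ≤ B` on their domains, then for every `t ∈ [0,T]`,
`∫₀ᵗ ∫₀¹ |g| + ‖ρ⁰‖_{L¹(Ω)} ≤ e^{Bt} ‖ρ⁰‖_{L¹(Ω)} + ∫₀ᵗ e^{B(t-u)} ∫₀¹ |f(u,s)| ds du`. -/
theorem stmt18 (T b B : ℝ) (hT : 0 < T) (hb : 1 < b) (hB : 0 < B)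
    (ρ0 : ℝ × ℝ → ℝ) (hρ0m : Measurable ρ0) (hρ0bd : ∃ C, ∀ Y, |ρ0 Y| ≤ C)
    (N : ℝ → ℝ) (hNm : Measurable N) (hNbd : ∃ C, ∀ s, |N s| ≤ C)
    (hNpos : ∀ s ∈ Set.Ioo (0:ℝ) 1, 0 ≤ N s)
    (hNint : (∫ s in Set.Ioo (0:ℝ) 1, N s) = 1)
    (β₁ : ℝ → ℝ → ℝ → ℝ) (hβ₁m : Measurable fun p : ℝ × ℝ × ℝ => β₁ p.1 p.2.1 p.2.2)
    (hβ₁bd : ∀ t ∈ Set.Ioo (0:ℝ) T, ∀ τ ∈ Set.Ioo (0:ℝ) T, ∀ s ∈ Set.Ioo (0:ℝ) 1,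
      |β₁ t τ s| ≤ B)
    (β₂ : ℝ → ℝ × ℝ → ℝ) (hβ₂m : Measurable fun p : ℝ × (ℝ × ℝ) => β₂ p.1 p.2)
    (hβ₂bd : ∀ t ∈ Set.Ioo (0:ℝ) T, ∀ Y ∈ Set.Ioo (1:ℝ) b ×ˢ Set.Ioo (1:ℝ) b, |β₂ t Y| ≤ B)
    (f : ℝ → ℝ → ℝ) (hfm : Measurable fun p : ℝ × ℝ => f p.1 p.2)
    (hfbd : ∃ C, ∀ t s, |f t s| ≤ C)
    (g : ℝ → ℝ → ℝ) (hgm : Measurable fun p : ℝ × ℝ => g p.1 p.2)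
    (hgbd : ∃ C, ∀ τ s, |g τ s| ≤ C)
    (heq : ∀ᵐ p ∂(volume.restrict (Set.Ioo 0 T ×ˢ Set.Ioo (0:ℝ) 1)),
      g p.1 p.2 =
        N p.2 * ((∫ τ' in Set.Ioo 0 p.1, ∫ s' in Set.Ioo (0:ℝ) 1, β₁ p.1 τ' s' * g τ' s') +
            ∫ Y in Set.Ioo (1:ℝ) b ×ˢ Set.Ioo (1:ℝ) b, β₂ p.1 Y * ρ0 Y) +
          f p.1 p.2) :
    ∀ t ∈ Set.Icc (0:ℝ) T,
      (∫ τ in Set.Ioo 0 t, ∫ s in Set.Ioo (0:ℝ) 1, |g τ s|) +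
          (∫ Y in Set.Ioo (1:ℝ) b ×ˢ Set.Ioo (1:ℝ) b, |ρ0 Y|) ≤
        Real.exp (B * t) * (∫ Y in Set.Ioo (1:ℝ) b ×ˢ Set.Ioo (1:ℝ) b, |ρ0 Y|) +
          ∫ u in Set.Ioo 0 t, Real.exp (B * (t - u)) * ∫ s in Set.Ioo (0:ℝ) 1, |f u s| :=
  stmt18_general T b B ρ0 hρ0m hρ0bd N hNpos hNint β₁ hβ₁bd β₂ hβ₂bd f hfm hfbd g hgm hgbd heq
end
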